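/- arXiv:1305.4027 — 6 statements merged into one kernel-verified Lean document; each statement's English description precedes it below -/
import Mathlib

section
/- Let d be the minimizer of s ↦ f(x) + ⟨∇_i f(x), s⟩ + (L_i/2)‖s‖² + h_i(x_i + s) over s ∈ ℝ^{n_i}, where f has block coordinate Lipschitz gradient with constant L_i and h is convex and block separable. Then the composite function F = f + h satisfies the descent inequality F(x + U_i d) ≤ F(x) − (L_i/2)‖d‖². -/
/-!
Two inequalities are added. The block-Lipschitz gradient gives, by integrating the derivative
along the segment `[x, x + d]`, the quadratic upper bound
`f (x + d) ≤ f x + ⟪∇f x, d⟫ + L/2 ‖d‖²`. The model `s ↦ ⟪∇f x, s⟫ + L/2 ‖s‖² + h (x + s)` is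
`L`-strongly convex on the block subspace, so its minimizer `d` beats the point `0` by `L/2 ‖d‖²`:
`⟪∇f x, d⟫ + L ‖d‖² + h (x + d) ≤ h x`.
-/

open scoped BigOperators RealInnerProductSpace
open Finset Filter

noncomputable section

/-- The ambient space `ℝ^n` with the Euclidean norm. -/
abbrev En (n : ℕ) := EuclideanSpace ℝ (Fin n)

/-- Projection onto block `i` of the block decomposition of `ℝ^n` given by the
block-index map `blk : Fin n → Fin N`; it realizes `U_i U_iᵀ y`. -/
def blockProj {n N : ℕ} (blk : Fin n → Fin N) (i : Fin N) (y : En n) : En n :=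
  WithLp.toLp 2 (fun j => if blk j = i then y j else 0)

/-- The squared block norm `‖x‖_L² = ∑ i, L i ‖x_i‖²`. -/
def blockNormSq {n N : ℕ} (blk : Fin n → Fin N) (L : Fin N → ℝ) (x : En n) : ℝ :=
  ∑ i, L i * ‖blockProj blk i x‖ ^ 2

open Topology

section

variable {E : Type*}

theorem convexOn_sum {ι : Type*} [AddCommMonoid E] [Module ℝ E] (t : Finset ι)
    {φ : ι → E → ℝ} (hφ : ∀ k ∈ t, ConvexOn ℝ Set.univ (φ k)) :
    ConvexOn ℝ Set.univ (fun y => ∑ k ∈ t, φ k y) := by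
  classical
  induction t using Finset.induction_on with
  | empty => simpa using convexOn_const (0 : ℝ) convex_univ
  | insert k t hk ih =>
    simp only [Finset.sum_insert hk]
    exact (hφ k (mem_insert_self k t)).add (ih fun l hl => hφ l (mem_insert_of_mem hl))

theorem StrongConvexOn.add_sq_norm_sub_le_of_isMinOn [NormedAddCommGroup E] [NormedSpace ℝ E]
    {s : Set E} {m : ℝ} {ψ : E → ℝ} {d y : E} (hψ : StrongConvexOn s m ψ) (hd : d ∈ s)
    (hmin : IsMinOn ψ s d) (hy : y ∈ s) :
    ψ d + m / 2 * ‖y - d‖ ^ 2 ≤ ψ y := by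
  -- compare `ψ d` with `ψ` at `t • y + (1 - t) • d`, divide by `t` and let `t → 0⁺`
  have hsegment : ∀ t ∈ Set.Ioo (0 : ℝ) 1, ψ d + (1 - t) * (m / 2 * ‖y - d‖ ^ 2) ≤ ψ y := by
    rintro t ⟨ht₀, ht₁⟩
    have hconv := hψ.2 hy hd ht₀.le (sub_nonneg.2 ht₁.le) (add_sub_cancel t 1)
    have hmem := hψ.1 hy hd ht₀.le (sub_nonneg.2 ht₁.le) (add_sub_cancel t 1)
    have hle := isMinOn_iff.1 hmin _ hmem
    simp only [smul_eq_mul] at hconv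
    have : t * (ψ d + (1 - t) * (m / 2 * ‖y - d‖ ^ 2)) ≤ t * ψ y := by linarith
    exact le_of_mul_le_mul_left this ht₀
  have hlim : Tendsto (fun t : ℝ => ψ d + (1 - t) * (m / 2 * ‖y - d‖ ^ 2)) (𝓝[>] 0)
      (𝓝 (ψ d + (1 - 0) * (m / 2 * ‖y - d‖ ^ 2))) :=
    (Continuous.tendsto (by fun_prop) 0).mono_left nhdsWithin_le_nhds
  have hev : ∀ᶠ t in 𝓝[>] (0 : ℝ), ψ d + (1 - t) * (m / 2 * ‖y - d‖ ^ 2) ≤ ψ y := by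
    filter_upwards [Ioo_mem_nhdsGT zero_lt_one] using hsegment
  simpa using le_of_tendsto hlim hev

variable [NormedAddCommGroup E] [InnerProductSpace ℝ E]

theorem strongConvexOn_const_add_inner_add_sq_add {s : Set E} (hs : Convex ℝ s) {φ : E → ℝ}
    (hφ : ConvexOn ℝ Set.univ φ) (c m : ℝ) (a : E) :
    StrongConvexOn s m (fun v => c + ⟪a, v⟫ + m / 2 * ‖v‖ ^ 2 + φ v) := by
  rw [strongConvexOn_iff_convex]
  have hlin : ConvexOn ℝ Set.univ (fun v => c + ⟪a, v⟫) :=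
    (convexOn_const c convex_univ).add ((innerₗ E a).convexOn convex_univ)
  refine ((hlin.add hφ).subset (Set.subset_univ s) hs).congr fun v _ => ?_
  simp only [Pi.add_apply]
  ring

/-- The descent lemma. -/
theorem le_add_inner_add_sq_of_inner_gradient_sub_le [CompleteSpace E] {f : E → ℝ}
    {g : E → E} (hg : ∀ y, HasGradientAt f (g y) y) {L : ℝ} {x d : E}
    (hL : ∀ t ∈ Set.Ioo (0 : ℝ) 1, ⟪g (x + t • d) - g x, d⟫ ≤ L * t * ‖d‖ ^ 2) :
    f (x + d) ≤ f x + ⟪g x, d⟫ + L / 2 * ‖d‖ ^ 2 := by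
  set ψ : ℝ → ℝ := fun t => f (x + t • d) - t * ⟪g x, d⟫ - L / 2 * t ^ 2 * ‖d‖ ^ 2
  have hψ' : ∀ t : ℝ, HasDerivAt ψ (⟪g (x + t • d) - g x, d⟫ - L * t * ‖d‖ ^ 2) t := by
    intro t
    have hline : HasDerivAt (fun t : ℝ => x + t • d) d t := by
      simpa using ((hasDerivAt_id t).smul_const d).const_add x
    have hf : HasDerivAt (fun t : ℝ => f (x + t • d)) ⟪g (x + t • d), d⟫ t :=
      (hg _).hasFDerivAt.comp_hasDerivAt t hline
    have hquad := ((hasDerivAt_pow 2 t).const_mul (L / 2)).mul_const (‖d‖ ^ 2)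
    refine ((hf.sub ((hasDerivAt_id t).mul_const ⟪g x, d⟫)).sub hquad).congr_deriv ?_
    rw [inner_sub_left]
    ring
  have hanti : AntitoneOn ψ (Set.Icc 0 1) := by
    refine antitoneOn_of_hasDerivWithinAt_nonpos (convex_Icc 0 1)
      (fun t _ => (hψ' t).continuousAt.continuousWithinAt)
      (fun t _ => (hψ' t).hasDerivWithinAt) fun t ht => ?_
    rw [interior_Icc] at ht
    exact sub_nonpos.2 (hL t ht)
  have h10 := hanti (Set.left_mem_Icc.2 zero_le_one) (Set.right_mem_Icc.2 zero_le_one)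
    zero_le_one
  simp only [ψ, zero_smul, add_zero, one_smul, zero_mul, sub_zero, one_mul, one_pow, mul_one,
    ne_eq, OfNat.ofNat_ne_zero, not_false_eq_true, zero_pow, mul_zero] at h10
  linarith

end

section Blocks

variable {n N : ℕ} (blk : Fin n → Fin N) (i : Fin N)

def blockProjₗ : En n →ₗ[ℝ] En n where
  toFun := blockProj blk i
  map_add' u v := by
    ext j
    simp only [blockProj, PiLp.add_apply, PiLp.toLp_apply]
    split <;> simp
  map_smul' c u := by
    ext j
    simp only [blockProj, PiLp.smul_apply, PiLp.toLp_apply, RingHom.id_apply, smul_eq_mul]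
    split <;> simp

/-- The range of `U_i`. -/
def blockSubspace : Submodule ℝ (En n) where
  carrier := {s | ∀ j, blk j ≠ i → s j = 0}
  add_mem' hu hv j hj := by simp [hu j hj, hv j hj]
  zero_mem' _ _ := rfl
  smul_mem' c _ hu j hj := by simp [hu j hj]

variable {blk i}

theorem inner_blockProj_of_mem_blockSubspace (u : En n) {s : En n}
    (hs : s ∈ blockSubspace blk i) : ⟪blockProj blk i u, s⟫ = ⟪u, s⟫ := by
  simp only [PiLp.inner_apply, RCLike.inner_apply, conj_trivial, blockProj]
  refine Finset.sum_congr rfl fun j _ => ?_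
  by_cases hj : blk j = i
  · simp [hj]
  · simp [hj, hs j hj]

theorem convexOn_of_eq_sum_comp_blockProj {h : En n → ℝ} {H : Fin N → En n → ℝ}
    (hH : ∀ k, ConvexOn ℝ Set.univ (H k)) (hsep : ∀ x, h x = ∑ k, H k (blockProj blk k x)) :
    ConvexOn ℝ Set.univ h := by
  rw [show h = fun x => ∑ k, H k (blockProjₗ blk k x) from funext hsep]
  exact convexOn_sum _ fun k _ => (hH k).comp_linearMap (blockProjₗ blk k)

theorem inner_sub_le_of_blockProj_lipschitz {g : En n → En n} {L : ℝ}
    (hlip : ∀ x, ∀ s ∈ blockSubspace blk i,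
      ‖blockProj blk i (g (x + s)) - blockProj blk i (g x)‖ ≤ L * ‖s‖)
    (x : En n) {d : En n} (hd : d ∈ blockSubspace blk i) {t : ℝ} (ht : 0 ≤ t) :
    ⟪g (x + t • d) - g x, d⟫ ≤ L * t * ‖d‖ ^ 2 := calc
  ⟪g (x + t • d) - g x, d⟫ = ⟪blockProj blk i (g (x + t • d)) - blockProj blk i (g x), d⟫ := by
    rw [inner_sub_left, inner_sub_left, inner_blockProj_of_mem_blockSubspace _ hd,
      inner_blockProj_of_mem_blockSubspace _ hd]
  _ ≤ ‖blockProj blk i (g (x + t • d)) - blockProj blk i (g x)‖ * ‖d‖ := real_inner_le_norm _ _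
  _ ≤ L * ‖t • d‖ * ‖d‖ := by
    gcongr
    exact hlip x (t • d) ((blockSubspace blk i).smul_mem t hd)
  _ = L * t * ‖d‖ ^ 2 := by rw [norm_smul, Real.norm_of_nonneg ht]; ring

end Blocks

theorem stmt3_general {n N : ℕ} (blk : Fin n → Fin N) (i : Fin N)
    (f h : En n → ℝ) (g : En n → En n) (hg : ∀ x, HasGradientAt f (g x) x)
    (Li : ℝ)
    (hlip : ∀ (x s : En n), (∀ j, blk j ≠ i → s j = 0) →
      ‖blockProj blk i (g (x + s)) - blockProj blk i (g x)‖ ≤ Li * ‖s‖)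
    (H : Fin N → En n → ℝ) (hHconv : ∀ k, ConvexOn ℝ Set.univ (H k))
    (hsep : ∀ x, h x = ∑ k, H k (blockProj blk k x))
    (x d : En n) (hdsupp : ∀ j, blk j ≠ i → d j = 0)
    (hdmin : ∀ s : En n, (∀ j, blk j ≠ i → s j = 0) →
      f x + ⟪g x, d⟫ + Li / 2 * ‖d‖ ^ 2 + h (x + d) ≤
      f x + ⟪g x, s⟫ + Li / 2 * ‖s‖ ^ 2 + h (x + s)) :
    f (x + d) + h (x + d) ≤ (f x + h x) - Li / 2 * ‖d‖ ^ 2 := by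
  have hd : d ∈ blockSubspace blk i := hdsupp
  have hdescent : f (x + d) ≤ f x + ⟪g x, d⟫ + Li / 2 * ‖d‖ ^ 2 :=
    le_add_inner_add_sq_of_inner_gradient_sub_le hg fun t ht =>
      inner_sub_le_of_blockProj_lipschitz hlip x hd ht.1.le
  have hshift : ConvexOn ℝ Set.univ (fun s => h (x + s)) := by
    have := (convexOn_of_eq_sum_comp_blockProj hHconv hsep).translate_right x
    rwa [Set.preimage_univ] at this
  have hmodel := strongConvexOn_const_add_inner_add_sq_add (blockSubspace blk i).convex
    hshift (f x) Li (g x)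
  have hmargin := hmodel.add_sq_norm_sub_le_of_isMinOn hd (fun s hs => hdmin s hs)
    (blockSubspace blk i).zero_mem
  simp only [zero_sub, norm_neg, inner_zero_right, add_zero, norm_zero, ne_eq,
    OfNat.ofNat_ne_zero, not_false_eq_true, zero_pow, mul_zero] at hmargin
  linarith

/-- Let `d` (supported on block `i`) minimize
`s ↦ f(x) + ⟨∇_i f(x), s⟩ + (L_i/2)‖s‖² + h_i(x_i + s)` over vectors supported on block `i`,
where `f` has block-coordinate Lipschitz gradient with constant `L_i > 0` on block `i` and
`h` is convex and block separable. Then `F = f + h` satisfies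
`F(x + U_i d) ≤ F(x) − (L_i/2)‖d‖²`. -/
theorem stmt3 {n N : ℕ} (blk : Fin n → Fin N) (i : Fin N)
    (f h : En n → ℝ) (g : En n → En n) (hg : ∀ x, HasGradientAt f (g x) x)
    (Li : ℝ) (hLi : 0 < Li)
    (hlip : ∀ (x s : En n), (∀ j, blk j ≠ i → s j = 0) →
      ‖blockProj blk i (g (x + s)) - blockProj blk i (g x)‖ ≤ Li * ‖s‖)
    (H : Fin N → En n → ℝ) (hHconv : ∀ k, ConvexOn ℝ Set.univ (H k))
    (hsep : ∀ x, h x = ∑ k, H k (blockProj blk k x)) (hcont : Continuous h)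
    (x d : En n) (hdsupp : ∀ j, blk j ≠ i → d j = 0)
    (hdmin : ∀ s : En n, (∀ j, blk j ≠ i → s j = 0) →
      f x + ⟪g x, d⟫ + Li / 2 * ‖d‖ ^ 2 + h (x + d) ≤
      f x + ⟪g x, s⟫ + Li / 2 * ‖s‖ ^ 2 + h (x + s)) :
    f (x + d) + h (x + d) ≤ (f x + h x) - Li / 2 * ‖d‖ ^ 2 :=
  stmt3_general blk i f h g hg Li hlip H hHconv hsep x d hdsupp hdmin
end
end

section
/- (Robbins–Siegmund supermartingale convergence) Let v_k, u_k, α_k be sequences of nonnegative random variables such that E[v_{k+1} | F_k] ≤ (1 + α_k) v_k − u_k for all k ≥ 0 almost surely, where F_k is the σ-algebra generated by v_0,…,v_k, u_0,…,u_k, α_0,…,α_k, and Σ_k α_k < ∞ almost surely. Then v_k converges almost surely to a nonnegative random variable v, and Σ_k u_k < ∞ almost surely. -/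
/-!
Let `P k = ∏_{j<k} (1 + α j)` (`compound`) and `W k = v k / P k + ∑_{j<k} u j / P (j + 1)`
(`compensated`). Dividing the drift condition by `P (k + 1)` turns it into
`E[W (k + 1) | ℱ k] ≤ W k`, so `W` is a nonnegative supermartingale and converges almost surely.
Where `∑ α j < ∞`, `P k` increases to a finite limit, at most `exp (∑ α j)`. The second
summand of `W` increases and is bounded by `W`, so it converges; hence so do `v k / P k` and
`v k = P k * (v k / P k)`, and `∑ u j ≤ exp (∑ α j) * ∑ u j / P (j + 1) < ∞`.
-/

open scoped BigOperators
open MeasureTheory Filter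

noncomputable section

open Finset Topology

theorem MeasureTheory.Supermartingale.exists_ae_tendsto_of_nonneg {Ω : Type*}
    {m0 : MeasurableSpace Ω} {μ : Measure Ω} [IsFiniteMeasure μ] {ℱ : Filtration ℕ m0}
    {f : ℕ → Ω → ℝ} (hf : Supermartingale f ℱ μ) (hf_nonneg : ∀ n, 0 ≤ᵐ[μ] f n) :
    ∀ᵐ ω ∂μ, ∃ c, Tendsto (fun n => f n ω) atTop (𝓝 c) := by
  have hbdd : ∀ n, eLpNorm ((-f) n) 1 μ ≤ (∫ ω, f 0 ω ∂μ).toNNReal := fun n => by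
    rw [Pi.neg_apply, eLpNorm_neg, eLpNorm_one_eq_lintegral_enorm,
      ← ofReal_integral_norm_eq_lintegral_enorm (hf.integrable n)]
    refine ENNReal.ofReal_le_ofReal ?_
    calc ∫ ω, ‖f n ω‖ ∂μ = ∫ ω, f n ω ∂μ :=
          integral_congr_ae ((hf_nonneg n).mono fun ω h => Real.norm_of_nonneg h)
      _ ≤ ∫ ω, f 0 ω ∂μ := by
          simpa only [setIntegral_univ] using hf.setIntegral_le n.zero_le MeasurableSet.univ
  filter_upwards [hf.neg.exists_ae_tendsto_of_bdd hbdd] with ω ⟨c, hc⟩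
  exact ⟨-c, by simpa using hc.neg⟩

namespace RobbinsSiegmund

def compound (a : ℕ → ℝ) (k : ℕ) : ℝ := ∏ j ∈ range k, (1 + a j)

def compensated (v u a : ℕ → ℝ) (k : ℕ) : ℝ :=
  v k / compound a k + ∑ j ∈ range k, u j / compound a (j + 1)

section Deterministic

variable {v u a : ℕ → ℝ}

theorem compound_succ (a : ℕ → ℝ) (k : ℕ) : compound a (k + 1) = compound a k * (1 + a k) :=
  prod_range_succ _ _

theorem one_le_compound (ha : ∀ j, 0 ≤ a j) (k : ℕ) : 1 ≤ compound a k :=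
  one_le_prod fun j _ => le_add_of_nonneg_right (ha j)

theorem compound_pos (ha : ∀ j, 0 ≤ a j) (k : ℕ) : 0 < compound a k :=
  one_pos.trans_le (one_le_compound ha k)

theorem monotone_compound (ha : ∀ j, 0 ≤ a j) : Monotone (compound a) :=
  monotone_nat_of_le_succ fun k => by
    rw [compound_succ]
    exact le_mul_of_one_le_right (compound_pos ha k).le (le_add_of_nonneg_right (ha k))

theorem compound_le_exp_tsum (ha : ∀ j, 0 ≤ a j) (ha_sum : Summable a) (k : ℕ) :
    compound a k ≤ Real.exp (∑' j, a j) :=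
  calc compound a k ≤ ∏ j ∈ range k, Real.exp (a j) :=
        prod_le_prod (fun j _ => by linarith [ha j]) fun j _ => by
          linarith [Real.add_one_le_exp (a j)]
    _ = Real.exp (∑ j ∈ range k, a j) := (Real.exp_sum _ _).symm
    _ ≤ Real.exp (∑' j, a j) := Real.exp_le_exp.mpr (ha_sum.sum_le_tsum _ fun j _ => ha j)

theorem compensated_nonneg (hv : ∀ k, 0 ≤ v k) (hu : ∀ k, 0 ≤ u k) (ha : ∀ j, 0 ≤ a j)
    (k : ℕ) : 0 ≤ compensated v u a k :=
  add_nonneg (div_nonneg (hv k) (compound_pos ha k).le)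
    (sum_nonneg fun j _ => div_nonneg (hu j) (compound_pos ha _).le)

theorem compensated_eq_inv_compound_succ_mul_add (ha : ∀ j, 0 ≤ a j) (k : ℕ) :
    compensated v u a k = (compound a (k + 1))⁻¹ * ((1 + a k) * v k - u k) +
      ∑ j ∈ range (k + 1), u j / compound a (j + 1) := by
  have hP := (compound_pos ha k).ne'
  have ha' : 1 + a k ≠ 0 := by linarith [ha k]
  rw [compensated, sum_range_succ, compound_succ]
  field_simp
  ring

theorem summable_div_compound_of_bddAbove (hv : ∀ k, 0 ≤ v k) (hu : ∀ k, 0 ≤ u k)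
    (ha : ∀ j, 0 ≤ a j) (hW : BddAbove (Set.range (compensated v u a))) :
    Summable fun j => u j / compound a (j + 1) := by
  obtain ⟨M, hM⟩ := hW
  refine summable_of_sum_range_le (c := M)
    (fun j => div_nonneg (hu j) (compound_pos ha _).le) fun n => ?_
  exact (le_add_of_nonneg_left (div_nonneg (hv n) (compound_pos ha n).le)).trans (hM ⟨n, rfl⟩)

theorem summable_of_summable_div_compound (hu : ∀ k, 0 ≤ u k) (ha : ∀ j, 0 ≤ a j)
    (ha_sum : Summable a) (h : Summable fun j => u j / compound a (j + 1)) : Summable u := by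
  refine (h.mul_left (Real.exp (∑' j, a j))).of_nonneg_of_le hu fun j => ?_
  calc u j = compound a (j + 1) * (u j / compound a (j + 1)) :=
        (mul_div_cancel₀ _ (compound_pos ha _).ne').symm
    _ ≤ Real.exp (∑' j, a j) * (u j / compound a (j + 1)) :=
        mul_le_mul_of_nonneg_right (compound_le_exp_tsum ha ha_sum _)
          (div_nonneg (hu j) (compound_pos ha _).le)

theorem tendsto_and_summable_of_tendsto_compensated (hv : ∀ k, 0 ≤ v k) (hu : ∀ k, 0 ≤ u k)
    (ha : ∀ j, 0 ≤ a j) (ha_sum : Summable a) {c : ℝ}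
    (hW : Tendsto (compensated v u a) atTop (𝓝 c)) :
    (∃ L, Tendsto v atTop (𝓝 L)) ∧ Summable u := by
  have hS := summable_div_compound_of_bddAbove hv hu ha hW.bddAbove_range
  have hP : Tendsto (compound a) atTop (𝓝 (⨆ k, compound a k)) :=
    tendsto_atTop_ciSup (monotone_compound ha)
      ⟨_, Set.forall_mem_range.2 (compound_le_exp_tsum ha ha_sum)⟩
  refine ⟨⟨_, ((hW.sub hS.hasSum.tendsto_sum_nat).mul hP).congr fun k => ?_⟩,
    summable_of_summable_div_compound hu ha ha_sum hS⟩
  simp [compensated, div_mul_cancel₀ _ (compound_pos ha k).ne']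

end Deterministic

section Stochastic

variable {Ω : Type*} {m0 : MeasurableSpace Ω} {μ : Measure Ω} {ℱ : Filtration ℕ m0}
  {v u α : ℕ → Ω → ℝ}

theorem measurable_compound (hα : Adapted ℱ α) {n k : ℕ} (hk : k ≤ n + 1) :
    Measurable[ℱ n] fun ω => compound (α · ω) k :=
  Finset.measurable_prod _ fun j hj =>
    measurable_const.add ((hα j).mono (ℱ.mono (by grind)) le_rfl)

theorem measurable_sum_div_compound (hu : Adapted ℱ u) (hα : Adapted ℱ α) {n k : ℕ}
    (hk : k ≤ n + 1) :
    Measurable[ℱ n] fun ω => ∑ j ∈ range k, u j ω / compound (α · ω) (j + 1) :=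
  Finset.measurable_sum _ fun j hj =>
    ((hu j).mono (ℱ.mono (by grind)) le_rfl).div
      (measurable_compound hα (by grind))

theorem adapted_compensated (hv : Adapted ℱ v) (hu : Adapted ℱ u) (hα : Adapted ℱ α) :
    Adapted ℱ fun k ω => compensated (v · ω) (u · ω) (α · ω) k := fun k =>
  ((hv k).div (measurable_compound hα k.le_succ)).add
    (measurable_sum_div_compound hu hα k.le_succ)

theorem integrable_div_compound {f : Ω → ℝ} (hf : Integrable f μ)
    (hα_nonneg : ∀ j ω, 0 ≤ α j ω) {k : ℕ}
    (hP : Measurable fun ω => compound (α · ω) k) :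
    Integrable (fun ω => f ω / compound (α · ω) k) μ := by
  refine hf.norm.mono' (hf.aemeasurable.div hP.aemeasurable).aestronglyMeasurable
    (ae_of_all _ fun ω => ?_)
  rw [norm_div, Real.norm_of_nonneg (compound_pos (hα_nonneg · ω) k).le]
  exact div_le_self (norm_nonneg _) (one_le_compound (hα_nonneg · ω) k)

theorem integrable_compensated (hα_nonneg : ∀ j ω, 0 ≤ α j ω) (hα : Adapted ℱ α)
    (hv_int : ∀ k, Integrable (v k) μ) (hu_int : ∀ k, Integrable (u k) μ) (k : ℕ) :
    Integrable (fun ω => compensated (v · ω) (u · ω) (α · ω) k) μ :=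
  (integrable_div_compound (hv_int k) hα_nonneg
      ((measurable_compound hα k.le_succ).mono (ℱ.le k) le_rfl)).add
    (integrable_finsetSum _ fun j _ => integrable_div_compound (hu_int j) hα_nonneg
      ((measurable_compound hα le_rfl).mono (ℱ.le j) le_rfl))

theorem supermartingale_compensated [IsFiniteMeasure μ] (hα_nonneg : ∀ j ω, 0 ≤ α j ω)
    (hv : Adapted ℱ v) (hu : Adapted ℱ u) (hα : Adapted ℱ α)
    (hv_int : ∀ k, Integrable (v k) μ) (hu_int : ∀ k, Integrable (u k) μ)
    (hcond : ∀ k, μ[v (k + 1) | ℱ k] ≤ᵐ[μ] fun ω => (1 + α k ω) * v k ω - u k ω) :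
    Supermartingale (fun k ω => compensated (v · ω) (u · ω) (α · ω) k) ℱ μ := by
  refine supermartingale_nat (adapted_compensated hv hu hα).stronglyAdapted
    (integrable_compensated hα_nonneg hα hv_int hu_int) fun k => ?_
  set Pinv : Ω → ℝ := fun ω => (compound (α · ω) (k + 1))⁻¹
  set S : Ω → ℝ := fun ω => ∑ j ∈ range (k + 1), u j ω / compound (α · ω) (j + 1)
  have hPinv : StronglyMeasurable[ℱ k] Pinv :=
    (measurable_compound hα le_rfl).inv.stronglyMeasurable
  have hS : StronglyMeasurable[ℱ k] S :=
    (measurable_sum_div_compound hu hα le_rfl).stronglyMeasurable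
  have hPv_int : Integrable (Pinv * v (k + 1)) μ := by
    have h := integrable_div_compound (hv_int (k + 1)) hα_nonneg
      ((measurable_compound hα le_rfl).mono (ℱ.le k) le_rfl)
    simp only [div_eq_inv_mul] at h
    exact h
  have hS_int : Integrable S μ := integrable_finsetSum _ fun j _ =>
    integrable_div_compound (hu_int j) hα_nonneg
      ((measurable_compound hα le_rfl).mono (ℱ.le j) le_rfl)
  have hsplit :
      (fun ω => compensated (v · ω) (u · ω) (α · ω) (k + 1)) = Pinv * v (k + 1) + S := by
    funext ω
    simp only [compensated, Pi.add_apply, Pi.mul_apply, div_eq_inv_mul, Pinv, S]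
  have hce : μ[Pinv * v (k + 1) + S | ℱ k] =ᵐ[μ] Pinv * μ[v (k + 1) | ℱ k] + S :=
    (condExp_add hPv_int hS_int _).trans <|
      (condExp_mul_of_stronglyMeasurable_left hPinv hPv_int (hv_int (k + 1))).add
        (condExp_of_stronglyMeasurable (ℱ.le k) hS hS_int).eventuallyEq
  rw [hsplit]
  filter_upwards [hce, hcond k] with ω hω hvω
  rw [hω, compensated_eq_inv_compound_succ_mul_add (hα_nonneg · ω)]
  exact add_le_add_left
    (mul_le_mul_of_nonneg_left hvω (inv_nonneg.2 (compound_pos (hα_nonneg · ω) _).le)) _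

end Stochastic

end RobbinsSiegmund

open RobbinsSiegmund

theorem stmt4_general {Ω : Type*} {m0 : MeasurableSpace Ω} (μ : Measure Ω) [IsProbabilityMeasure μ]
    (ℱ : MeasureTheory.Filtration ℕ m0)
    (v u α : ℕ → Ω → ℝ)
    (hv_nonneg : ∀ k ω, 0 ≤ v k ω) (hu_nonneg : ∀ k ω, 0 ≤ u k ω)
    (hα_nonneg : ∀ k ω, 0 ≤ α k ω)
    (hv_adapted : MeasureTheory.Adapted ℱ v)
    (hu_adapted : MeasureTheory.Adapted ℱ u)
    (hα_adapted : MeasureTheory.Adapted ℱ α)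
    (hv_int : ∀ k, Integrable (v k) μ)
    (hu_int : ∀ k, Integrable (u k) μ)
    (hcond : ∀ k, μ[v (k + 1) | ℱ k] ≤ᵐ[μ] fun ω => (1 + α k ω) * v k ω - u k ω)
    (hα_sum : ∀ᵐ ω ∂μ, Summable fun k => α k ω) :
    ∃ V : Ω → ℝ, (∀ ω, 0 ≤ V ω) ∧
      (∀ᵐ ω ∂μ, Tendsto (fun k => v k ω) atTop (nhds (V ω))) ∧
      (∀ᵐ ω ∂μ, Summable fun k => u k ω) := by
  have hW := (supermartingale_compensated hα_nonneg hv_adapted hu_adapted hα_adapted hv_int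
    hu_int hcond).exists_ae_tendsto_of_nonneg fun k => ae_of_all _ fun ω =>
      compensated_nonneg (hv_nonneg · ω) (hu_nonneg · ω) (hα_nonneg · ω) k
  have h : ∀ᵐ ω ∂μ, (∃ L, Tendsto (v · ω) atTop (𝓝 L)) ∧ Summable (u · ω) := by
    filter_upwards [hW, hα_sum] with ω ⟨c, hc⟩ hαω
    exact tendsto_and_summable_of_tendsto_compensated (hv_nonneg · ω) (hu_nonneg · ω)
      (hα_nonneg · ω) hαω hc
  -- `max 0` keeps `V` nonnegative where `limUnder` returns a junk value
  refine ⟨fun ω => max 0 (limUnder atTop (v · ω)), fun ω => le_max_left _ _, ?_,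
    h.mono fun _ h => h.2⟩
  filter_upwards [h] with ω ⟨⟨L, hL⟩, _⟩
  rwa [hL.limUnder_eq, max_eq_right (ge_of_tendsto' hL (hv_nonneg · ω))]

/-- **Robbins–Siegmund supermartingale convergence.**
Let `v k`, `u k`, `α k` be sequences of nonnegative random variables adapted to a
filtration `ℱ` (e.g. the one generated by `v_0,…,v_k, u_0,…,u_k, α_0,…,α_k`) such that
`E[v_{k+1} | ℱ_k] ≤ (1 + α_k) v_k − u_k` almost surely for all `k`, and
`∑ k, α k < ∞` almost surely. Then `v_k` converges almost surely to a nonnegative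
random variable `V`, and `∑ k, u k < ∞` almost surely. -/
theorem stmt4 {Ω : Type*} {m0 : MeasurableSpace Ω} (μ : Measure Ω) [IsProbabilityMeasure μ]
    (ℱ : MeasureTheory.Filtration ℕ m0)
    (v u α : ℕ → Ω → ℝ)
    (hv_nonneg : ∀ k ω, 0 ≤ v k ω) (hu_nonneg : ∀ k ω, 0 ≤ u k ω)
    (hα_nonneg : ∀ k ω, 0 ≤ α k ω)
    (hv_adapted : MeasureTheory.Adapted ℱ v)
    (hu_adapted : MeasureTheory.Adapted ℱ u)
    (hα_adapted : MeasureTheory.Adapted ℱ α)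
    (hv_int : ∀ k, Integrable (v k) μ)
    (hu_int : ∀ k, Integrable (u k) μ)
    (hα_int : ∀ k, Integrable (α k) μ)
    (hcond : ∀ k, μ[v (k + 1) | ℱ k] ≤ᵐ[μ] fun ω => (1 + α k ω) * v k ω - u k ω)
    (hα_sum : ∀ᵐ ω ∂μ, Summable fun k => α k ω) :
    ∃ V : Ω → ℝ, (∀ ω, 0 ≤ V ω) ∧
      (∀ᵐ ω ∂μ, Tendsto (fun k => v k ω) atTop (nhds (V ω))) ∧
      (∀ᵐ ω ∂μ, Summable fun k => u k ω) :=
  stmt4_general μ ℱ v u α hv_nonneg hu_nonneg hα_nonneg hv_adapted hu_adapted hα_adapted hv_int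
    hu_int hcond hα_sum
end
end

section
/- For the 1-random coordinate descent method with uniform block selection applied to F = f + h under the block Lipschitz and convex-separable assumptions, the expected optimality measure satisfies min_{0 ≤ l ≤ k} E[(M_1(x^l, L))²] ≤ 2N (F(x⁰) − F*) / (k + 1) for all k ≥ 0, where M_1(x, L) = ‖d_L(x)‖_L and F* = inf F. -/
/-!
Fix `x` and put `u = d_L(x)`. On block `i` the block model majorizes `F(x + ·)` (block descent
lemma), and `dᵢ(x)` minimizes it, so `F(x + dᵢ(x))` is at most the model at `Uᵢ Uᵢᵀ u`. Summing
over the `N` blocks, with `h` separable,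
`∑ᵢ F(x + dᵢ(x)) ≤ N F(x) + ⟪∇f(x), u⟫ + ½‖u‖_L² + h(x + u) − h(x)`.
Comparing `u` with `t • u` in the full model, using convexity of `h` and letting `t → 1`, gives
`⟪∇f(x), u⟫ + h(x + u) − h(x) ≤ −‖u‖_L²`. Hence
`E[F(x^{l+1})] ≤ E[F(x^l)] − E[‖d_L(x^l)‖_L²] / (2N)`; telescoping and `F ≥ F*` bound the sum of
the first `k + 1` expectations by `2N (F(x⁰) − F*)`, and the smallest is at most their average.
-/

open scoped BigOperators RealInnerProductSpace
open Finset Filter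

noncomputable section

open Set Topology

section Descent

variable {E : Type*} [NormedAddCommGroup E] [InnerProductSpace ℝ E]

theorem le_add_inner_add_half_of_inner_sub_le [CompleteSpace E] {f : E → ℝ} {g : E → E}
    (hg : ∀ y, HasGradientAt f (g y) y) {x s : E} {c : ℝ}
    (hc : ∀ t ∈ Ioo (0 : ℝ) 1, ⟪g (x + t • s) - g x, s⟫ ≤ c * t) :
    f (x + s) ≤ f x + ⟪g x, s⟫ + c / 2 := by
  set φ : ℝ → ℝ := fun t => f (x + t • s) - t * ⟪g x, s⟫ - c / 2 * t ^ 2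
  have hφ : ∀ t, HasDerivAt φ (⟪g (x + t • s), s⟫ - ⟪g x, s⟫ - c * t) t := by
    intro t
    have hline : HasDerivAt (fun t : ℝ => x + t • s) s t := by
      simpa using ((hasDerivAt_id t).smul_const s).const_add x
    have hf : HasDerivAt (fun t : ℝ => f (x + t • s)) ⟪g (x + t • s), s⟫ t := by
      simpa [InnerProductSpace.toDual_apply_apply, Function.comp_def] using
        (hg (x + t • s)).hasFDerivAt.comp_hasDerivAt t hline
    refine ((hf.sub (hasDerivAt_mul_const ⟪g x, s⟫)).sub
      ((hasDerivAt_pow 2 t).const_mul (c / 2))).congr_deriv ?_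
    ring
  have hdiff : Differentiable ℝ φ := fun t => (hφ t).differentiableAt
  have hanti : AntitoneOn φ (Icc 0 1) := by
    refine antitoneOn_of_deriv_nonpos (convex_Icc 0 1) hdiff.continuous.continuousOn
      hdiff.differentiableOn fun t ht => ?_
    rw [interior_Icc] at ht
    rw [(hφ t).deriv, ← inner_sub_left]
    linarith [hc t ht]
  have h01 := hanti (left_mem_Icc.2 zero_le_one) (right_mem_Icc.2 zero_le_one) zero_le_one
  simp only [φ, one_smul, zero_smul, add_zero, zero_mul, sub_zero, one_mul, one_pow,
    zero_pow two_ne_zero, mul_zero] at h01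
  linarith

theorem ConvexOn.inner_add_sub_le_neg_of_forall_le {h : E → ℝ} (hh : ConvexOn ℝ univ h)
    {Q : E → ℝ} (hQ : ∀ (t : ℝ) s, Q (t • s) = t ^ 2 * Q s) {v x u : E}
    (hu : ∀ s, ⟪v, u⟫ + 1 / 2 * Q u + h (x + u) ≤ ⟪v, s⟫ + 1 / 2 * Q s + h (x + s)) :
    ⟪v, u⟫ + h (x + u) - h x ≤ -Q u := by
  have hbound : ∀ t ∈ Ioo (0 : ℝ) 1, ⟪v, u⟫ + h (x + u) - h x ≤ -((1 + t) / 2) * Q u := by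
    rintro t ⟨ht0, ht1⟩
    have hmin := hu (t • u)
    rw [hQ, real_inner_smul_right] at hmin
    have hconv : h (x + t • u) ≤ (1 - t) * h x + t * h (x + u) := by
      have := hh.2 (mem_univ x) (mem_univ (x + u)) (by linarith : 0 ≤ 1 - t) ht0.le
        (by ring)
      rwa [smul_add, ← add_assoc, ← add_smul, sub_add_cancel, one_smul] at this
    have hscaled : (1 - t) * (⟪v, u⟫ + h (x + u) - h x) ≤ (1 - t) * (-((1 + t) / 2) * Q u) := by
      linarith
    exact le_of_mul_le_mul_left hscaled (by linarith)
  have hlim : Tendsto (fun t : ℝ => -((1 + t) / 2) * Q u) (𝓝[<] 1) (𝓝 (-Q u)) := by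
    have hcont : Continuous fun t : ℝ => -((1 + t) / 2) * Q u := by fun_prop
    convert (hcont.tendsto 1).mono_left nhdsWithin_le_nhds using 2
    norm_num
  exact ge_of_tendsto hlim (mem_of_superset (Ioo_mem_nhdsLT zero_lt_one) hbound)

end Descent

variable {n N : ℕ} {blk : Fin n → Fin N}

section Blocks

theorem blockProj_apply (i : Fin N) (y : En n) (j : Fin n) :
    blockProj blk i y j = if blk j = i then y j else 0 := rfl

variable (blk) in
def blockProjLinear (i : Fin N) : En n →ₗ[ℝ] En n where
  toFun := blockProj blk i
  map_add' x y := by ext j; simp only [blockProj_apply, PiLp.add_apply]; split_ifs <;> simp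
  map_smul' t x := by ext j; simp [blockProj_apply]

theorem blockProj_add (i : Fin N) (x y : En n) :
    blockProj blk i (x + y) = blockProj blk i x + blockProj blk i y :=
  (blockProjLinear blk i).map_add x y

theorem blockProj_smul (i : Fin N) (t : ℝ) (x : En n) :
    blockProj blk i (t • x) = t • blockProj blk i x :=
  (blockProjLinear blk i).map_smul t x

theorem blockProj_apply_eq_zero (i : Fin N) (y : En n) :
    ∀ j, blk j ≠ i → blockProj blk i y j = 0 := fun _ hj => if_neg hj

theorem blockProj_of_supp {i : Fin N} {s : En n} (hs : ∀ j, blk j ≠ i → s j = 0) :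
    blockProj blk i s = s := by
  ext j
  by_cases hj : blk j = i
  · exact if_pos hj
  · exact (if_neg hj).trans (hs j hj).symm

theorem blockProj_of_supp_of_ne {i i' : Fin N} {s : En n} (hs : ∀ j, blk j ≠ i → s j = 0)
    (hi : i' ≠ i) : blockProj blk i' s = 0 := by
  ext j
  by_cases hj : blk j = i'
  · exact (if_pos hj).trans (hs j (hj ▸ hi))
  · exact if_neg hj

theorem sum_blockProj (u : En n) : ∑ i, blockProj blk i u = u := by
  ext j
  simp [blockProj_apply]

theorem inner_blockProj_left_of_supp {i : Fin N} (y : En n) {s : En n}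
    (hs : ∀ j, blk j ≠ i → s j = 0) : ⟪blockProj blk i y, s⟫ = ⟪y, s⟫ := by
  rw [← blockProj_of_supp hs]
  simp only [PiLp.inner_apply, blockProj_apply]
  refine Finset.sum_congr rfl fun j _ => ?_
  split_ifs <;> simp

theorem blockNormSq_smul (L : Fin N → ℝ) (t : ℝ) (x : En n) :
    blockNormSq blk L (t • x) = t ^ 2 * blockNormSq blk L x := by
  simp only [blockNormSq, blockProj_smul, norm_smul, mul_pow, Real.norm_eq_abs, sq_abs,
    Finset.mul_sum]
  exact Finset.sum_congr rfl fun i _ => by ring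

end Blocks

section Separable

variable {H : Fin N → En n → ℝ} {h : En n → ℝ}

theorem convexOn_of_separable (hH : ∀ k, ConvexOn ℝ univ (H k))
    (hsep : ∀ x, h x = ∑ k, H k (blockProj blk k x)) : ConvexOn ℝ univ h := by
  have : ConvexOn ℝ univ (∑ k, H k ∘ blockProjLinear blk k) :=
    Finset.sum_induction _ (ConvexOn ℝ univ) (fun _ _ => ConvexOn.add)
      (convexOn_const 0 convex_univ) fun k _ => (hH k).comp_linearMap _
  convert this using 1
  ext x
  simp [hsep, blockProjLinear]

theorem sum_sub_of_separable (hsep : ∀ x, h x = ∑ k, H k (blockProj blk k x)) (x u : En n) :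
    ∑ i, (h (x + blockProj blk i u) - h x) = h (x + u) - h x := by
  have hblock : ∀ i, h (x + blockProj blk i u) - h x =
      H i (blockProj blk i (x + u)) - H i (blockProj blk i x) := by
    intro i
    rw [hsep, hsep, ← Finset.sum_sub_distrib, Finset.sum_eq_single i]
    · rw [blockProj_add, blockProj_of_supp (blockProj_apply_eq_zero i u), ← blockProj_add]
    · intro j _ hj
      rw [blockProj_add, blockProj_of_supp_of_ne (blockProj_apply_eq_zero i u) hj, add_zero,
        sub_self]
    · simp
  rw [Finset.sum_congr rfl fun i _ => hblock i, Finset.sum_sub_distrib, ← hsep, ← hsep]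

end Separable

section Step

variable {L : Fin N → ℝ} {f h : En n → ℝ} {g : En n → En n}

theorem block_descent (hg : ∀ x, HasGradientAt f (g x) x) {i : Fin N}
    (hlip : ∀ x s : En n, (∀ j, blk j ≠ i → s j = 0) →
      ‖blockProj blk i (g (x + s)) - blockProj blk i (g x)‖ ≤ L i * ‖s‖)
    {x s : En n} (hs : ∀ j, blk j ≠ i → s j = 0) :
    f (x + s) ≤ f x + ⟪g x, s⟫ + L i / 2 * ‖s‖ ^ 2 := by
  refine (le_add_inner_add_half_of_inner_sub_le hg (c := L i * ‖s‖ ^ 2) ?_).trans_eq (by ring)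
  rintro t ⟨ht, -⟩
  have hts : ∀ j, blk j ≠ i → (t • s) j = 0 := fun j hj => by simp [hs j hj]
  calc ⟪g (x + t • s) - g x, s⟫
      = ⟪blockProj blk i (g (x + t • s)) - blockProj blk i (g x), s⟫ := by
        rw [inner_sub_left, inner_sub_left, inner_blockProj_left_of_supp _ hs,
          inner_blockProj_left_of_supp _ hs]
    _ ≤ L i * ‖t • s‖ * ‖s‖ :=
        (real_inner_le_norm _ _).trans (by gcongr; exact hlip x _ hts)
    _ = L i * ‖s‖ ^ 2 * t := by rw [norm_smul, Real.norm_of_nonneg ht.le]; ring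

theorem blockNormSq_le_two_mul_sub_sum (hg : ∀ x, HasGradientAt f (g x) x)
    (hlip : ∀ (i : Fin N) (x s : En n), (∀ j, blk j ≠ i → s j = 0) →
      ‖blockProj blk i (g (x + s)) - blockProj blk i (g x)‖ ≤ L i * ‖s‖)
    {H : Fin N → En n → ℝ} (hH : ∀ k, ConvexOn ℝ univ (H k))
    (hsep : ∀ x, h x = ∑ k, H k (blockProj blk k x))
    {F : En n → ℝ} (hF : ∀ x, F x = f x + h x) {d : En n → Fin N → En n}
    (hdsupp : ∀ x i j, blk j ≠ i → d x i j = 0)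
    (hdmin : ∀ (x : En n) (i : Fin N) (s : En n), (∀ j, blk j ≠ i → s j = 0) →
      f x + ⟪g x, d x i⟫ + L i / 2 * ‖d x i‖ ^ 2 + h (x + d x i) ≤
      f x + ⟪g x, s⟫ + L i / 2 * ‖s‖ ^ 2 + h (x + s))
    {dL : En n → En n}
    (hdL : ∀ x s : En n,
      f x + ⟪g x, dL x⟫ + (1 / 2) * blockNormSq blk L (dL x) + h (x + dL x) ≤
      f x + ⟪g x, s⟫ + (1 / 2) * blockNormSq blk L s + h (x + s))
    (x : En n) :
    blockNormSq blk L (dL x) ≤ 2 * (N * F x - ∑ i, F (x + d x i)) := by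
  set u := dL x
  have hblock : ∀ i, F (x + d x i) - F x ≤ ⟪g x, blockProj blk i u⟫ +
      L i / 2 * ‖blockProj blk i u‖ ^ 2 + (h (x + blockProj blk i u) - h x) := by
    intro i
    have hmodel := hdmin x i _ (blockProj_apply_eq_zero i u)
    have hdescent := block_descent hg (hlip i) (x := x) (hdsupp x i)
    rw [hF, hF]
    linarith
  have hsum : ∑ i, (F (x + d x i) - F x) ≤
      ⟪g x, u⟫ + 1 / 2 * blockNormSq blk L u + (h (x + u) - h x) := by
    refine (Finset.sum_le_sum fun i _ => hblock i).trans_eq ?_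
    rw [Finset.sum_add_distrib, Finset.sum_add_distrib, ← inner_sum, sum_blockProj,
      sum_sub_of_separable hsep, blockNormSq, Finset.mul_sum]
    congr 2
    exact Finset.sum_congr rfl fun i _ => by ring
  have hprox : ⟪g x, u⟫ + h (x + u) - h x ≤ -blockNormSq blk L u :=
    (convexOn_of_separable hH hsep).inner_add_sub_le_neg_of_forall_le (blockNormSq_smul L)
      fun s => by linarith [hdL x s]
  rw [Finset.sum_sub_distrib, Finset.sum_const, Finset.card_univ, Fintype.card_fin,
    nsmul_eq_mul] at hsum
  linarith

end Step

section Paths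

variable {α : Type*} {X : (k : ℕ) → (Fin k → Fin N) → α} {T : α → Fin N → α}

variable (N X) in
/-- The expectation of `φ (x^l)` when the iterates along a realization `w` of the first `l`
i.i.d. uniform block indices are `X l w`. -/
def pathMean (φ : α → ℝ) (l : ℕ) : ℝ :=
  ((N : ℝ) ^ l)⁻¹ * ∑ w : Fin l → Fin N, φ (X l w)

theorem sum_paths_succ
    (hX : ∀ k (w : Fin (k + 1) → Fin N),
      X (k + 1) w = T (X k (fun t => w t.castSucc)) (w (Fin.last k)))
    (φ : α → ℝ) (l : ℕ) :
    ∑ w : Fin (l + 1) → Fin N, φ (X (l + 1) w) = ∑ w : Fin l → Fin N, ∑ a, φ (T (X l w) a) := by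
  rw [← (Fin.snocEquiv fun _ => Fin N).sum_comp, Fintype.sum_prod_type, Finset.sum_comm]
  simp [hX]

theorem le_pathMean (hN : 0 < N) {φ : α → ℝ} {m : ℝ} (hm : ∀ x, m ≤ φ x) (l : ℕ) :
    m ≤ pathMean N X φ l := by
  have hpow : (0 : ℝ) < (N : ℝ) ^ l := by positivity
  rw [pathMean, le_inv_mul_iff₀ hpow]
  simpa using Finset.card_nsmul_le_sum univ (fun w => φ (X l w)) m fun w _ => hm _

theorem pathMean_le_mul_sub_pathMean_succ (hN : 0 < N)
    (hX : ∀ k (w : Fin (k + 1) → Fin N),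
      X (k + 1) w = T (X k (fun t => w t.castSucc)) (w (Fin.last k)))
    {φ ψ : α → ℝ} {c : ℝ} (hψ : ∀ x, ψ x ≤ c * (N * φ x - ∑ a, φ (T x a))) (l : ℕ) :
    pathMean N X ψ l ≤ c * N * (pathMean N X φ l - pathMean N X φ (l + 1)) := by
  have hNne : (N : ℝ) ≠ 0 := by positivity
  calc pathMean N X ψ l
      ≤ ((N : ℝ) ^ l)⁻¹ * ∑ w : Fin l → Fin N, c * (N * φ (X l w) - ∑ a, φ (T (X l w) a)) := by
        rw [pathMean]
        gcongr with w
        exact hψ _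
    _ = c * N * (pathMean N X φ l - pathMean N X φ (l + 1)) := by
        simp only [pathMean, sum_paths_succ hX, ← Finset.mul_sum, Finset.sum_sub_distrib,
          pow_succ]
        field_simp

end Paths

theorem exists_le_div_of_le_mul_sub {a b : ℕ → ℝ} {c m : ℝ} (hc : 0 ≤ c)
    (hb : ∀ l, b l ≤ c * (a l - a (l + 1))) (hm : ∀ l, m ≤ a l) (k : ℕ) :
    ∃ l ≤ k, b l ≤ c * (a 0 - m) / (k + 1) := by
  have hsum : ∑ l ∈ range (k + 1), b l ≤ ∑ _l ∈ range (k + 1), c * (a 0 - m) / (k + 1) := by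
    calc ∑ l ∈ range (k + 1), b l
        ≤ ∑ l ∈ range (k + 1), c * (a l - a (l + 1)) := Finset.sum_le_sum fun l _ => hb l
      _ = c * (a 0 - a (k + 1)) := by
        rw [← Finset.mul_sum, Finset.sum_range_sub']
      _ ≤ c * (a 0 - m) := by gcongr; exact hm _
      _ = ∑ _l ∈ range (k + 1), c * (a 0 - m) / (k + 1) := by
        rw [Finset.sum_const, card_range, nsmul_eq_mul]
        push_cast
        field_simp
  obtain ⟨l, hl, hle⟩ := Finset.exists_le_of_sum_le nonempty_range_add_one hsum
  exact ⟨l, Nat.lt_succ_iff.mp (mem_range.mp hl), hle⟩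

theorem stmt6_general {n N : ℕ} (hN : 0 < N) (blk : Fin n → Fin N)
    (L : Fin N → ℝ)
    (f h : En n → ℝ) (g : En n → En n) (hg : ∀ x, HasGradientAt f (g x) x)
    (hlip : ∀ (i : Fin N) (x s : En n), (∀ j, blk j ≠ i → s j = 0) →
      ‖blockProj blk i (g (x + s)) - blockProj blk i (g x)‖ ≤ L i * ‖s‖)
    (H : Fin N → En n → ℝ) (hHconv : ∀ k, ConvexOn ℝ Set.univ (H k))
    (hsep : ∀ x, h x = ∑ k, H k (blockProj blk k x))
    (F : En n → ℝ) (hF : ∀ x, F x = f x + h x)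
    (Fstar : ℝ) (hFstar : IsGLB (Set.range F) Fstar)
    -- the block coordinate descent directions
    (d : En n → Fin N → En n)
    (hdsupp : ∀ x i j, blk j ≠ i → d x i j = 0)
    (hdmin : ∀ (x : En n) (i : Fin N) (s : En n), (∀ j, blk j ≠ i → s j = 0) →
      f x + ⟪g x, d x i⟫ + L i / 2 * ‖d x i‖ ^ 2 + h (x + d x i) ≤
      f x + ⟪g x, s⟫ + L i / 2 * ‖s‖ ^ 2 + h (x + s))
    -- the full proximal-gradient map `d_L`
    (dL : En n → En n)
    (hdL : ∀ x s : En n,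
      f x + ⟪g x, dL x⟫ + (1 / 2) * blockNormSq blk L (dL x) + h (x + dL x) ≤
      f x + ⟪g x, s⟫ + (1 / 2) * blockNormSq blk L s + h (x + s))
    -- the trajectories of the algorithm along each realization of the random indices
    (x0 : En n) (X : (k : ℕ) → (Fin k → Fin N) → En n)
    (hX0 : ∀ w, X 0 w = x0)
    (hXs : ∀ k (w : Fin (k + 1) → Fin N),
      X (k + 1) w = X k (fun t => w t.castSucc) +
        d (X k (fun t => w t.castSucc)) (w (Fin.last k)))
    (k : ℕ) :
    ∃ l ≤ k, ((N : ℝ) ^ l)⁻¹ * (∑ w : Fin l → Fin N, blockNormSq blk L (dL (X l w))) ≤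
      2 * N * (F x0 - Fstar) / (k + 1) := by
  have hdecrease : ∀ l, pathMean N X (fun x => blockNormSq blk L (dL x)) l ≤
      2 * N * (pathMean N X F l - pathMean N X F (l + 1)) :=
    pathMean_le_mul_sub_pathMean_succ hN hXs
      (blockNormSq_le_two_mul_sub_sum hg hlip hHconv hsep hF hdsupp hdmin hdL)
  have hbounded : ∀ l, Fstar ≤ pathMean N X F l :=
    le_pathMean hN fun x => hFstar.1 ⟨x, rfl⟩
  have hstart : pathMean N X F 0 = F x0 := by simp [pathMean, hX0]
  rw [← hstart]
  exact exists_le_div_of_le_mul_sub (by positivity) hdecrease hbounded k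

/-- Convergence rate of the 1-random coordinate descent method with
uniform block selection for `F = f + h`.  The random iterates are encoded by their values
`X k w` along every realization `w : Fin k → Fin N` of the first `k` i.i.d. uniform block
indices, so that `E[(M₁(x^l, L))²] = N^{-l} ∑_w ‖d_L(X l w)‖_L²` where
`M₁(x, L) = ‖d_L(x)‖_L`.  Then
`min_{0 ≤ l ≤ k} E[(M₁(x^l, L))²] ≤ 2N (F(x⁰) − F*)/(k+1)` with `F* = inf F`. -/
theorem stmt6 {n N : ℕ} (hN : 0 < N) (blk : Fin n → Fin N)
    (L : Fin N → ℝ) (hL : ∀ i, 0 < L i)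
    (f h : En n → ℝ) (g : En n → En n) (hg : ∀ x, HasGradientAt f (g x) x)
    (hlip : ∀ (i : Fin N) (x s : En n), (∀ j, blk j ≠ i → s j = 0) →
      ‖blockProj blk i (g (x + s)) - blockProj blk i (g x)‖ ≤ L i * ‖s‖)
    (H : Fin N → En n → ℝ) (hHconv : ∀ k, ConvexOn ℝ Set.univ (H k))
    (hsep : ∀ x, h x = ∑ k, H k (blockProj blk k x)) (hcont : Continuous h)
    (F : En n → ℝ) (hF : ∀ x, F x = f x + h x)
    (Fstar : ℝ) (hFstar : IsGLB (Set.range F) Fstar)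
    -- the block coordinate descent directions
    (d : En n → Fin N → En n)
    (hdsupp : ∀ x i j, blk j ≠ i → d x i j = 0)
    (hdmin : ∀ (x : En n) (i : Fin N) (s : En n), (∀ j, blk j ≠ i → s j = 0) →
      f x + ⟪g x, d x i⟫ + L i / 2 * ‖d x i‖ ^ 2 + h (x + d x i) ≤
      f x + ⟪g x, s⟫ + L i / 2 * ‖s‖ ^ 2 + h (x + s))
    -- the full proximal-gradient map `d_L`
    (dL : En n → En n)
    (hdL : ∀ x s : En n,
      f x + ⟪g x, dL x⟫ + (1 / 2) * blockNormSq blk L (dL x) + h (x + dL x) ≤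
      f x + ⟪g x, s⟫ + (1 / 2) * blockNormSq blk L s + h (x + s))
    -- the trajectories of the algorithm along each realization of the random indices
    (x0 : En n) (X : (k : ℕ) → (Fin k → Fin N) → En n)
    (hX0 : ∀ w, X 0 w = x0)
    (hXs : ∀ k (w : Fin (k + 1) → Fin N),
      X (k + 1) w = X k (fun t => w t.castSucc) +
        d (X k (fun t => w t.castSucc)) (w (Fin.last k)))
    (k : ℕ) :
    ∃ l ≤ k, ((N : ℝ) ^ l)⁻¹ * (∑ w : Fin l → Fin N, blockNormSq blk L (dL (X l w))) ≤
      2 * N * (F x0 - Fstar) / (k + 1) :=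
  stmt6_general hN blk L f h g hg hlip H hHconv hsep F hF Fstar hFstar d hdsupp hdmin dL hdL x0 X
    hX0 hXs k
end
end

section
/- Let S = Null(aᵀ) ⊆ ℝ^n for a nonzero vector a. If d ∈ S is an elementary vector of S (a nonzero vector of S having no nonzero conformal vector in S with strictly smaller support), then |supp(d)| ≤ 2. Moreover, any d ∈ S admits a conformal realization d = d¹ + ⋯ + d^s where each d^t ∈ S is an elementary vector conformal to d. -/
/-!
From a nonzero `d ∈ S` one splits off a conformal elementary vector `p` with at most two nonzero
coordinates, leaving a remainder `d - p` that is conformal to `d` with strictly smaller support.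
If `d_l ≠ 0` for some `l` with `a_l = 0`, take `p = d_l e_l`. Otherwise the terms `a_l d_l` of
`aᵀd = 0` take both signs, say at `i` and `j` with `|a_i d_i| ≤ |a_j d_j|`, and
`p = d_i e_i + s d_j e_j` with `s = -a_i d_i / (a_j d_j) ∈ (0, 1]`; the bound `s ≤ 1` makes
`d - p` conformal to `d`. Here every nonzero vector of `S` supported in `supp d` has at least two
nonzero coordinates, so `p` is elementary.
Induction on `|supp d|` gives the conformal realization, and for an elementary `d` the piece `p`
cannot have smaller support, so `|supp d| = |supp p| ≤ 2`.
-/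

open scoped BigOperators
open Finset

noncomputable section

/-- `d'` is conformal to `d`: `supp(d') ⊆ supp(d)` and `d'_j d_j ≥ 0` for all `j`. -/
def ConformalTo {n : ℕ} (d' d : Fin n → ℝ) : Prop :=
  (∀ j, d j = 0 → d' j = 0) ∧ ∀ j, 0 ≤ d' j * d j

/-- `d` is an elementary vector of the subspace `S = Null(aᵀ)`: a nonzero vector of `S`
having no nonzero conformal vector in `S` with strictly smaller support. -/
def IsElementary {n : ℕ} (a d : Fin n → ℝ) : Prop :=
  (∑ l, a l * d l = 0) ∧ d ≠ 0 ∧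
    ∀ d' : Fin n → ℝ, (∑ l, a l * d' l = 0) → d' ≠ 0 → ConformalTo d' d →
      {l | d' l ≠ 0} ⊂ {l | d l ≠ 0} → False

open Function

namespace ConformalTo

variable {n : ℕ} {x y z : Fin n → ℝ}

lemma support_subset (h : ConformalTo x y) : support x ⊆ support y :=
  fun j hx hy => hx (h.1 j hy)

lemma trans (hxy : ConformalTo x y) (hyz : ConformalTo y z) : ConformalTo x z := by
  refine ⟨fun j hz => hxy.1 j (hyz.1 j hz), fun j => ?_⟩
  by_cases hy : y j = 0
  · simp [hxy.1 j hy]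
  · nlinarith [hxy.2 j, hyz.2 j, mul_self_pos.mpr hy]

end ConformalTo

section Elementary

variable {n : ℕ} {a d θ : Fin n → ℝ}

lemma conformalTo_mul (hθ : 0 ≤ θ) : ConformalTo (θ * d) d :=
  ⟨fun j hj => by simp [hj], fun j => by
    simpa [mul_assoc] using mul_nonneg (hθ j) (mul_self_nonneg (d j))⟩

lemma conformalTo_sub_mul (hθ : θ ≤ 1) : ConformalTo (d - θ * d) d := by
  have : d - θ * d = (1 - θ) * d := by ring
  exact this ▸ conformalTo_mul (sub_nonneg.mpr hθ)

lemma isElementary_of_ncard_support_le (hp : a ⬝ᵥ d = 0) (hp0 : d ≠ 0)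
    (hmin : ∀ q, a ⬝ᵥ q = 0 → q ≠ 0 → support q ⊆ support d →
      (support d).ncard ≤ (support q).ncard) :
    IsElementary a d :=
  ⟨hp, hp0, fun q hq hq0 _ hlt =>
    (Set.ncard_lt_ncard hlt (Set.toFinite _)).not_ge (hmin q hq hq0 hlt.subset)⟩

lemma one_le_ncard_support (hd0 : d ≠ 0) : 1 ≤ (support d).ncard :=
  (Set.ncard_pos (Set.toFinite _)).mpr (support_nonempty_iff.mpr hd0)

lemma two_le_ncard_support (hd : a ⬝ᵥ d = 0) (hd0 : d ≠ 0)
    (had : ∀ l ∈ support d, a l ≠ 0) : 2 ≤ (support d).ncard := by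
  by_contra! hlt
  obtain ⟨m, hm⟩ : ∃ m, support d = {m} :=
    Set.ncard_eq_one.mp (by have := one_le_ncard_support hd0; omega)
  have hdm : d m ≠ 0 := show m ∈ support d from hm ▸ rfl
  have hsingle : d = Pi.single m (d m) := by
    ext l
    by_cases hl : l = m
    · subst hl; simp
    · simp [hl, support_subset_iff'.mp hm.subset l hl]
  rw [hsingle, dotProduct_single] at hd
  exact mul_ne_zero (had m hdm) hdm hd

lemma isElementary_single_mul {i : Fin n} (hai : a i = 0) (hdi : d i ≠ 0) :
    IsElementary a (Pi.single i 1 * d) := by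
  have hp : Pi.single i 1 * d = Pi.single i (d i) := by
    ext l; by_cases hl : l = i <;> simp [hl]
  rw [hp]
  refine isElementary_of_ncard_support_le (by simp [hai]) (by simpa using hdi)
    fun q _ hq0 _ => ?_
  calc (support (Pi.single i (d i))).ncard ≤ ({i} : Set (Fin n)).ncard :=
        Set.ncard_le_ncard Pi.support_single_subset
    _ = 1 := Set.ncard_singleton i
    _ ≤ _ := one_le_ncard_support hq0

lemma exists_elementary_mul_of_mul_neg (had : ∀ l ∈ support d, a l ≠ 0) {i j : Fin n}
    (hneg : a i * d i * (a j * d j) < 0) (habs : |a i * d i| ≤ |a j * d j|) :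
    ∃ θ : Fin n → ℝ, 0 ≤ θ ∧ θ ≤ 1 ∧ θ i = 1 ∧ IsElementary a (θ * d) ∧
      (support (θ * d)).ncard ≤ 2 := by
  set s := -(a i * d i) / (a j * d j) with hs
  have hij : i ≠ j := by rintro rfl; nlinarith
  have hdi : d i ≠ 0 := by rintro h; simp [h] at hneg
  have hs0 : 0 < s := by
    rcases mul_neg_iff.mp hneg with ⟨hx, hy⟩ | ⟨hx, hy⟩
    · exact div_pos_of_neg_of_neg (by linarith) hy
    · exact div_pos (by linarith) hy
  have hs1 : s ≤ 1 := by
    rw [← abs_of_pos hs0, hs, abs_div, abs_neg]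
    exact div_le_one_of_le₀ habs (abs_nonneg _)
  have hp : (Pi.single i 1 + Pi.single j s) * d = Pi.single i (d i) + Pi.single j (s * d j) := by
    rw [add_mul, ← Pi.single_mul_left, ← Pi.single_mul_left, one_mul]
  have hθ0 : 0 ≤ (Pi.single i 1 + Pi.single j s : Fin n → ℝ) :=
    add_nonneg (Pi.single_nonneg.mpr zero_le_one) (Pi.single_nonneg.mpr hs0.le)
  have hsub := (conformalTo_mul (d := d) hθ0).support_subset
  refine ⟨Pi.single i 1 + Pi.single j s, hθ0, fun l => ?_, by simp [hij], ?_⟩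
  · by_cases hli : l = i
    · subst hli; simp [hij]
    · by_cases hlj : l = j
      · subst hlj; simpa [hli] using hs1
      · simp [hli, hlj]
  have hsupp : support (Pi.single i (d i) + Pi.single j (s * d j) : Fin n → ℝ) ⊆ {i, j} := by
    rw [Set.insert_eq]
    exact (support_add _ _).trans
      (Set.union_subset_union Pi.support_single_subset Pi.support_single_subset)
  have hcard := (Set.ncard_le_ncard hsupp).trans_eq (Set.ncard_pair hij)
  rw [hp] at hsub ⊢
  refine ⟨isElementary_of_ncard_support_le ?_ ?_ fun q hq hq0 hqp => ?_, hcard⟩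
  · have hyj : a j * d j ≠ 0 := by rintro h; simp [h] at hneg
    rw [dotProduct_add, dotProduct_single, dotProduct_single]
    linear_combination div_mul_cancel₀ (-(a i * d i)) hyj
  · exact fun h => hdi (by simpa [hij] using congrFun h i)
  · exact hcard.trans (two_le_ncard_support hq hq0 fun l hl => had l (hsub (hqp hl)))

lemma exists_elementary_mul (hd : a ⬝ᵥ d = 0) (hd0 : d ≠ 0) :
    ∃ θ : Fin n → ℝ, 0 ≤ θ ∧ θ ≤ 1 ∧ (∃ m, θ m = 1 ∧ d m ≠ 0) ∧ IsElementary a (θ * d) ∧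
      (support (θ * d)).ncard ≤ 2 := by
  obtain ⟨k, hdk⟩ := Function.ne_iff.mp hd0
  by_cases hvanish : ∃ i, d i ≠ 0 ∧ a i = 0
  · obtain ⟨i, hdi, hai⟩ := hvanish
    refine ⟨Pi.single i 1, Pi.single_nonneg.mpr zero_le_one, fun l => ?_, ⟨i, by simp, hdi⟩,
      isElementary_single_mul hai hdi, ?_⟩
    · by_cases hl : l = i <;> simp [hl]
    · calc (support (Pi.single i 1 * d)).ncard ≤ ({i} : Set (Fin n)).ncard :=
            Set.ncard_le_ncard ((support_mul_subset_left _ _).trans Pi.support_single_subset)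
        _ ≤ 2 := by simp
  push Not at hvanish
  have hak : a k * d k ≠ 0 := mul_ne_zero (hvanish k hdk) hdk
  obtain ⟨i, -, hi⟩ := Finset.exists_pos_of_sum_zero_of_exists_nonzero (fun l => a l * d l) hd
    ⟨k, Finset.mem_univ _, hak⟩
  obtain ⟨j, -, hj⟩ := Finset.exists_pos_of_sum_zero_of_exists_nonzero (fun l => -(a l * d l))
    (by rw [Finset.sum_neg_distrib, neg_eq_zero]; exact hd)
    ⟨k, Finset.mem_univ _, neg_ne_zero.mpr hak⟩
  have hneg : a i * d i * (a j * d j) < 0 := mul_neg_of_pos_of_neg hi (by linarith)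
  have had : ∀ l ∈ support d, a l ≠ 0 := hvanish
  rcases le_total |a i * d i| |a j * d j| with h | h
  · obtain ⟨θ, h0, h1, hθ, hel, hc⟩ := exists_elementary_mul_of_mul_neg had hneg h
    exact ⟨θ, h0, h1, ⟨i, hθ, fun h => by simp [h] at hi⟩, hel, hc⟩
  · obtain ⟨θ, h0, h1, hθ, hel, hc⟩ :=
      exists_elementary_mul_of_mul_neg had (by rwa [mul_comm] at hneg) h
    exact ⟨θ, h0, h1, ⟨j, hθ, fun h => by simp [h] at hj⟩, hel, hc⟩

lemma exists_elementary_conformal_split (hd : a ⬝ᵥ d = 0) (hd0 : d ≠ 0) :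
    ∃ p, IsElementary a p ∧ (support p).ncard ≤ 2 ∧ ConformalTo p d ∧ ConformalTo (d - p) d ∧
      support (d - p) ⊂ support d := by
  obtain ⟨θ, h0, h1, ⟨m, hm, hdm⟩, hel, hc⟩ := exists_elementary_mul hd hd0
  have hrest := conformalTo_sub_mul (d := d) h1
  exact ⟨θ * d, hel, hc, conformalTo_mul h0, hrest,
    hrest.support_subset.ssubset_of_mem_notMem hdm (by simp [hm])⟩

theorem IsElementary.ncard_support_le_two (hd : IsElementary a d) : (support d).ncard ≤ 2 := by
  obtain ⟨p, hp, hcard, hpd, -, -⟩ := exists_elementary_conformal_split hd.1 hd.2.1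
  have : support p = support d :=
    hpd.support_subset.eq_of_not_ssubset fun hlt => hd.2.2 p hp.1 hp.2.1 hpd hlt
  exact this ▸ hcard

end Elementary

theorem exists_eq_sum_isElementary_conformalTo {n : ℕ} {a d : Fin n → ℝ} (hd : a ⬝ᵥ d = 0) :
    ∃ (s : ℕ) (dv : Fin s → Fin n → ℝ), d = ∑ t, dv t ∧
      ∀ t, IsElementary a (dv t) ∧ ConformalTo (dv t) d := by
  by_cases hd0 : d = 0
  · exact ⟨0, ![], by simp [hd0], fun t => t.elim0⟩
  obtain ⟨p, hp, -, hpd, hrest, hlt⟩ := exists_elementary_conformal_split hd hd0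
  have := Set.ncard_lt_ncard hlt (Set.toFinite _)
  obtain ⟨s, dv, hsum, hdv⟩ :=
    exists_eq_sum_isElementary_conformalTo (a := a) (d := d - p)
      (by rw [dotProduct_sub, hd, show a ⬝ᵥ p = 0 from hp.1, sub_zero])
  refine ⟨s + 1, Fin.cons p dv, by simp [Fin.sum_cons, ← hsum], Fin.cases ⟨hp, hpd⟩ fun t => ?_⟩
  simpa using ⟨(hdv t).1, (hdv t).2.trans hrest⟩
termination_by (support d).ncard

theorem stmt10_general {n : ℕ} (a : Fin n → ℝ) :
    (∀ d : Fin n → ℝ, IsElementary a d → Set.ncard {l | d l ≠ 0} ≤ 2) ∧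
    (∀ d : Fin n → ℝ, (∑ l, a l * d l = 0) →
      ∃ (s : ℕ) (dv : Fin s → Fin n → ℝ), d = ∑ t, dv t ∧
        ∀ t, IsElementary a (dv t) ∧ ConformalTo (dv t) d) :=
  ⟨fun _ hd => hd.ncard_support_le_two, fun _ hd => exists_eq_sum_isElementary_conformalTo hd⟩

/-- Let `S = Null(aᵀ)` for a nonzero vector `a`. Every elementary
vector `d` of `S` has `|supp(d)| ≤ 2`; moreover, every `d ∈ S` admits a conformal
realization `d = d¹ + ⋯ + dˢ` where each `dᵗ ∈ S` is an elementary vector conformal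
to `d`. -/
theorem stmt10 {n : ℕ} (a : Fin n → ℝ) (ha : a ≠ 0) :
    (∀ d : Fin n → ℝ, IsElementary a d → Set.ncard {l | d l ≠ 0} ≤ 2) ∧
    (∀ d : Fin n → ℝ, (∑ l, a l * d l = 0) →
      ∃ (s : ℕ) (dv : Fin s → Fin n → ℝ), d = ∑ t, dv t ∧
        ∀ t, IsElementary a (dv t) ∧ ConformalTo (dv t) d) :=
  stmt10_general a
end
end

section
/- Let h : ℝ^n → ℝ ∪ {∞} be convex and coordinatewise separable, h(x) = Σ_{i=1}^n h_i(x_i). For any x, x + d ∈ dom h, if d = d¹ + ⋯ + d^s for some s ≥ 2 with each nonzero d^t ∈ ℝ^n conformal to d, then h(x + d) − h(x) ≥ Σ_{t=1}^s (h(x + d^t) − h(x)). -/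
open scoped BigOperators
open Finset

noncomputable section

/-!
Write each summand coordinatewise as `dᵗᵢ = λᵗᵢ dᵢ`. Conformality makes `λᵗᵢ ≥ 0`, and
`∑ₜ λᵗᵢ = 1` whenever `dᵢ ≠ 0`, so `xᵢ + dᵗᵢ` lies on the segment `[xᵢ, xᵢ + dᵢ]` and convexity of
`hᵢ` gives `hᵢ(xᵢ + dᵗᵢ) - hᵢ(xᵢ) ≤ λᵗᵢ (hᵢ(xᵢ + dᵢ) - hᵢ(xᵢ))`. Summing over `t` and then over
`i` gives the claim. Finiteness of `h` at `x` and `x + d` makes every `hᵢ` finite on these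
segments, so the whole argument runs in `ℝ`.
-/

namespace EReal

theorem coe_finset_sum {ι : Type*} (s : Finset ι) (f : ι → ℝ) :
    ((∑ i ∈ s, f i : ℝ) : EReal) = ∑ i ∈ s, (f i : EReal) :=
  map_sum (⟨⟨Real.toEReal, coe_zero⟩, coe_add⟩ : ℝ →+ EReal) f s

theorem sum_ne_bot {ι : Type*} {s : Finset ι} {f : ι → EReal} (hf : ∀ i ∈ s, f i ≠ ⊥) :
    ∑ i ∈ s, f i ≠ ⊥ := by
  induction s using Finset.cons_induction with
  | empty => simp
  | cons a s ha ih =>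
    rw [sum_cons, Ne, add_eq_bot_iff, not_or]
    exact ⟨hf a (mem_cons_self a s), ih fun i hi => hf i (mem_cons_of_mem hi)⟩

theorem sum_ne_top_iff {ι : Type*} {s : Finset ι} {f : ι → EReal} (hf : ∀ i ∈ s, f i ≠ ⊥) :
    ∑ i ∈ s, f i ≠ ⊤ ↔ ∀ i ∈ s, f i ≠ ⊤ := by
  induction s using Finset.cons_induction with
  | empty => simp
  | cons a s ha ih =>
    have hs : ∀ i ∈ s, f i ≠ ⊥ := fun i hi => hf i (mem_cons_of_mem hi)
    rw [sum_cons, add_ne_top_iff_ne_top₂ (hf a (mem_cons_self a s)) (sum_ne_bot hs), ih hs,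
      forall_mem_cons]

theorem sum_eq_coe_sum_toReal {ι : Type*} {s : Finset ι} {f : ι → EReal}
    (hbot : ∀ i ∈ s, f i ≠ ⊥) (htop : ∀ i ∈ s, f i ≠ ⊤) :
    ∑ i ∈ s, f i = ((∑ i ∈ s, (f i).toReal : ℝ) : EReal) := by
  rw [coe_finset_sum]
  exact sum_congr rfl fun i hi => (coe_toReal (htop i hi) (hbot i hi)).symm

end EReal

section ERealConvex

variable {f : ℝ → EReal} (hbot : ∀ r, f r ≠ ⊥)
  (hconv : ∀ p q t : ℝ, 0 ≤ t → t ≤ 1 →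
    f (t * p + (1 - t) * q) ≤ (t : EReal) * f p + ((1 - t : ℝ) : EReal) * f q)
include hbot hconv

theorem le_coe_of_ereal_convex {p q t : ℝ} (hp : f p ≠ ⊤) (hq : f q ≠ ⊤) (ht₀ : 0 ≤ t)
    (ht₁ : t ≤ 1) :
    f (t * p + (1 - t) * q) ≤ ((t * (f p).toReal + (1 - t) * (f q).toReal : ℝ) : EReal) := by
  have h := hconv p q t ht₀ ht₁
  rwa [← EReal.coe_toReal hp (hbot p), ← EReal.coe_toReal hq (hbot q), ← EReal.coe_mul,
    ← EReal.coe_mul, ← EReal.coe_add] at h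

theorem convexOn_toReal_of_ereal_convex :
    ConvexOn ℝ {r | f r ≠ ⊤} (fun r => (f r).toReal) := by
  have key : ∀ p ∈ {r | f r ≠ ⊤}, ∀ q ∈ {r | f r ≠ ⊤}, ∀ a b : ℝ, 0 ≤ a → 0 ≤ b → a + b = 1 →
      f (a * p + b * q) ≤ ((a * (f p).toReal + b * (f q).toReal : ℝ) : EReal) := by
    intro p hp q hq a b ha hb hab
    obtain rfl : b = 1 - a := by linarith
    exact le_coe_of_ereal_convex hbot hconv hp hq ha (by linarith)
  refine ⟨fun p hp q hq a b ha hb hab => ?_, fun p hp q hq a b ha hb hab => ?_⟩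
  · exact ne_top_of_le_ne_top (EReal.coe_ne_top _) (key p hp q hq a b ha hb hab)
  · simpa only [smul_eq_mul, EReal.toReal_coe] using
      EReal.toReal_le_toReal (key p hp q hq a b ha hb hab) (hbot _) (EReal.coe_ne_top _)

end ERealConvex

section Conformal

variable {ι : Type*} [Fintype ι] {b : ℝ} {c : ι → ℝ}

theorem div_mem_Icc_of_conformal (hc : ∑ t, c t = b) (hnn : ∀ t, 0 ≤ c t * b) (t : ι) :
    c t / b ∈ Set.Icc (0 : ℝ) 1 := by
  have hdiv : ∀ t, 0 ≤ c t / b := by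
    intro t
    rcases eq_or_ne b 0 with rfl | hb
    · simp
    · rw [← mul_div_mul_right (c t) b hb]
      exact div_nonneg (hnn t) (mul_self_nonneg b)
  refine ⟨hdiv t, ?_⟩
  calc c t / b ≤ ∑ t, c t / b := single_le_sum (fun t _ => hdiv t) (mem_univ t)
    _ = b / b := by rw [← sum_div, hc]
    _ ≤ 1 := div_self_le_one b

variable {s : Set ℝ} {g : ℝ → ℝ} {a : ℝ}
  (hc : ∑ t, c t = b) (hz : ∀ t, b = 0 → c t = 0) (hnn : ∀ t, 0 ≤ c t * b)
include hc hz hnn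

theorem ConvexOn.add_mem_of_conformal (hg : ConvexOn ℝ s g) (ha : a ∈ s) (hab : a + b ∈ s)
    (t : ι) : a + c t ∈ s := by
  rw [← div_mul_cancel_of_imp (hz t)]
  exact hg.1.add_smul_mem ha hab (div_mem_Icc_of_conformal hc hnn t)

theorem ConvexOn.sum_sub_le_of_conformal (hg : ConvexOn ℝ s g) (ha : a ∈ s) (hab : a + b ∈ s) :
    ∑ t, (g (a + c t) - g a) ≤ g (a + b) - g a := by
  have hterm : ∀ t, g (a + c t) - g a ≤ c t / b * (g (a + b) - g a) := by
    intro t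
    obtain ⟨hl₀, hl₁⟩ := div_mem_Icc_of_conformal hc hnn t
    have h := hg.2 ha hab (sub_nonneg.2 hl₁) hl₀ (sub_add_cancel 1 (c t / b))
    rw [smul_eq_mul, smul_eq_mul, smul_eq_mul, smul_eq_mul] at h
    have hpt : (1 - c t / b) * a + c t / b * (a + b) = a + c t := by
      linear_combination div_mul_cancel_of_imp (hz t)
    rw [hpt] at h
    linarith
  calc ∑ t, (g (a + c t) - g a) ≤ ∑ t, c t / b * (g (a + b) - g a) :=
        sum_le_sum fun t _ => hterm t
    _ = b / b * (g (a + b) - g a) := by rw [← sum_mul, ← sum_div, hc]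
    _ = g (a + b) - g a := by rcases eq_or_ne b 0 with rfl | hb <;> simp [*]

end Conformal

theorem sum_sub_le_of_conformal_of_separable {n : ℕ} {ι : Type*} [Fintype ι]
    {s : Fin n → Set ℝ} {g : Fin n → ℝ → ℝ} (hg : ∀ i, ConvexOn ℝ (s i) (g i))
    {x d : Fin n → ℝ} (hx : ∀ i, x i ∈ s i) (hxd : ∀ i, x i + d i ∈ s i) {dv : ι → Fin n → ℝ}
    (hsum : d = ∑ t, dv t) (hcf : ∀ t, ConformalTo (dv t) d) :
    ∑ t, (∑ i, g i (x i + dv t i) - ∑ i, g i (x i)) ≤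
      ∑ i, g i (x i + d i) - ∑ i, g i (x i) := by
  have hdi : ∀ i, ∑ t, dv t i = d i := fun i => by simp [hsum]
  calc ∑ t, (∑ i, g i (x i + dv t i) - ∑ i, g i (x i))
      = ∑ i, ∑ t, (g i (x i + dv t i) - g i (x i)) := by
        simp only [← sum_sub_distrib]; exact sum_comm
    _ ≤ ∑ i, (g i (x i + d i) - g i (x i)) := sum_le_sum fun i _ =>
        (hg i).sum_sub_le_of_conformal (hdi i) (fun t => (hcf t).1 i) (fun t => (hcf t).2 i)
          (hx i) (hxd i)
    _ = ∑ i, g i (x i + d i) - ∑ i, g i (x i) := sum_sub_distrib ..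

theorem stmt11_general {n : ℕ} (hi : Fin n → ℝ → EReal)
    (hbot : ∀ i r, hi i r ≠ ⊥)
    (hconv : ∀ (i : Fin n) (p q t : ℝ), 0 ≤ t → t ≤ 1 →
      hi i (t * p + (1 - t) * q) ≤ (t : EReal) * hi i p + ((1 - t : ℝ) : EReal) * hi i q)
    (h : (Fin n → ℝ) → EReal) (hdef : ∀ x : Fin n → ℝ, h x = ∑ i, hi i (x i))
    (x d : Fin n → ℝ) (hx : h x ≠ ⊤) (hxd : h (x + d) ≠ ⊤)
    (s : ℕ) (dv : Fin s → Fin n → ℝ)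
    (hsum : d = ∑ t, dv t) (hcf : ∀ t, ConformalTo (dv t) d) :
    ∑ t, (h (x + dv t) - h x) ≤ h (x + d) - h x := by
  have hdom : ∀ y, h y ≠ ⊤ → ∀ i, hi i (y i) ≠ ⊤ := fun y hy i =>
    (EReal.sum_ne_top_iff fun i _ => hbot i _).1 (hdef y ▸ hy) i (mem_univ i)
  have hreal : ∀ y, (∀ i, hi i (y i) ≠ ⊤) → h y = ((∑ i, (hi i (y i)).toReal : ℝ) : EReal) :=
    fun y hy => (hdef y).trans (EReal.sum_eq_coe_sum_toReal (fun i _ => hbot i _) fun i _ => hy i)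
  have hg i := convexOn_toReal_of_ereal_convex (hbot i) (hconv i)
  have hdi : ∀ i, ∑ t, dv t i = d i := fun i => by simp [hsum]
  have hxdv : ∀ t i, hi i (x i + dv t i) ≠ ⊤ := fun t i =>
    (hg i).add_mem_of_conformal (hdi i) (fun t => (hcf t).1 i) (fun t => (hcf t).2 i)
      (hdom x hx i) (hdom _ hxd i) t
  have hsep := sum_sub_le_of_conformal_of_separable hg (hdom x hx) (hdom _ hxd) hsum hcf
  calc ∑ t, (h (x + dv t) - h x)
      = ((∑ t, (∑ i, (hi i (x i + dv t i)).toReal - ∑ i, (hi i (x i)).toReal) : ℝ) : EReal) := by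
        rw [EReal.coe_finset_sum]
        refine sum_congr rfl fun t _ => ?_
        rw [hreal (x + dv t) (hxdv t), hreal x (hdom x hx), EReal.coe_sub]; rfl
    _ ≤ (((∑ i, (hi i (x i + d i)).toReal - ∑ i, (hi i (x i)).toReal) : ℝ) : EReal) :=
        EReal.coe_le_coe hsep
    _ = h (x + d) - h x := by
        rw [hreal (x + d) (hdom _ hxd), hreal x (hdom x hx), EReal.coe_sub]; rfl

/-- Let `h : ℝⁿ → ℝ ∪ {∞}` be convex and coordinatewise separable,
`h(x) = ∑ i, h_i(x_i)` with each `h_i : ℝ → ℝ ∪ {∞}` convex (and proper, never `−∞`).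
For `x, x + d ∈ dom h`, if `d = d¹ + ⋯ + dˢ` with `s ≥ 2` and each `dᵗ` nonzero and
conformal to `d`, then `h(x + d) − h(x) ≥ ∑ t (h(x + dᵗ) − h(x))`. -/
theorem stmt11 {n : ℕ} (hi : Fin n → ℝ → EReal)
    (hbot : ∀ i r, hi i r ≠ ⊥)
    (hconv : ∀ (i : Fin n) (p q t : ℝ), 0 ≤ t → t ≤ 1 →
      hi i (t * p + (1 - t) * q) ≤ (t : EReal) * hi i p + ((1 - t : ℝ) : EReal) * hi i q)
    (h : (Fin n → ℝ) → EReal) (hdef : ∀ x : Fin n → ℝ, h x = ∑ i, hi i (x i))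
    (x d : Fin n → ℝ) (hx : h x ≠ ⊤) (hxd : h (x + d) ≠ ⊤)
    (s : ℕ) (hs : 2 ≤ s) (dv : Fin s → Fin n → ℝ)
    (hsum : d = ∑ t, dv t) (hnz : ∀ t, dv t ≠ 0) (hcf : ∀ t, ConformalTo (dv t) d) :
    ∑ t, (h (x + dv t) - h x) ≤ h (x + d) - h x :=
  stmt11_general hi hbot hconv h hdef x d hx hxd s dv hsum hcf
end
end

section
/- Let x be feasible for aᵀx = b and let (i,j) be chosen uniformly among the N(N−1)/2 unordered block pairs. If d_{ij} minimizes the 2-block quadratic model with constant L_{ij} over S_{ij} = {s ∈ S : s_l = 0 for l ≠ i, j}, then E[ψ_{L_{ij}·1}(d_{ij}; x)] ≤ (1 − 2/(N(N−1))) F(x) + (2/(N(N−1))) ψ_{NΓ}(d_{NΓ}(x); x), where Γ_i = (1/N) Σ_{j=1}^N L_{ij} and d_{NΓ}(x) minimizes ψ_{NΓ}(·; x) over S = {s : aᵀs = 0}. -/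
open scoped BigOperators RealInnerProductSpace
open Finset Filter

noncomputable section

/-! Conformal realization turns `dN ∈ ker aᵀ` into a sum of elementary vectors of `ker aᵀ`,
each supported on at most two coordinates and conformal to `dN`; grouping them by the pair of
blocks they meet writes `dN = ∑_{i<j} s_{ij}` with `s_{ij} ∈ S_{ij}` conformal to `dN`. Each
`d_{ij}` beats `s_{ij}` in its own 2-block model, and the models of the `s_{ij}` add up to at
most `(M - 1) F(x) + ψ_{NΓ}(dN; x)`, `M = N(N-1)/2`: the linear terms add up to `⟨∇f(x), dN⟩`;
conformality gives `∑ s_{ij,l}² ≤ dN_l²`, which with `L_{ij} ≤ min(NΓ_i, NΓ_j)` bounds the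
quadratic terms; and `x_l + s_{ij,l}` lies on the segment from `x_l` to `x_l + dN_l` with
weights adding up to one, so convexity of the separable `h` bounds the `h`-terms. -/

section Conformal

variable {ι : Type*}

def IsConformalTo (e d : EuclideanSpace ℝ ι) : Prop := ∀ l, e l ∈ Set.uIcc 0 (d l)

namespace IsConformalTo

variable {d d' e : EuclideanSpace ℝ ι}

lemma trans (h₁ : IsConformalTo e d') (h₂ : IsConformalTo d' d) : IsConformalTo e d :=
  fun l => Set.uIcc_subset_uIcc Set.left_mem_uIcc (h₂ l) (h₁ l)

lemma sub_left (h : IsConformalTo e d) : IsConformalTo (d - e) d := by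
  intro l
  have := h l
  simp only [PiLp.sub_apply, Set.mem_uIcc] at this ⊢
  rcases this with ⟨h0, h1⟩ | ⟨h0, h1⟩
  · left; constructor <;> linarith
  · right; constructor <;> linarith

lemma eq_zero_of_eq_zero (h : IsConformalTo e d) {l : ι} (hl : d l = 0) : e l = 0 := by
  simpa [hl] using h l

end IsConformalTo

lemma mem_uIcc_zero_iff {r c : ℝ} : r ∈ Set.uIcc 0 c ↔ ∃ θ ∈ Set.Icc (0 : ℝ) 1, θ * c = r := by
  rw [← segment_eq_uIcc, segment_eq_image]
  simp

lemma mem_uIcc_zero_of_sum_eq {T : Type*} [Fintype T] {r : T → ℝ} {c : ℝ}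
    (hr : ∀ t, r t ∈ Set.uIcc 0 c) (hsum : ∑ t, r t = c) (S : Finset T) :
    ∑ t ∈ S, r t ∈ Set.uIcc 0 c := by
  rcases le_total 0 c with hc | hc
  · rw [Set.uIcc_of_le hc] at hr ⊢
    exact ⟨Finset.sum_nonneg fun t _ => (hr t).1,
      hsum ▸ Finset.sum_le_univ_sum_of_nonneg fun t => (hr t).1⟩
  · rw [Set.uIcc_of_ge hc] at hr ⊢
    have := Finset.sum_le_univ_sum_of_nonneg (s := S) fun t => neg_nonneg.2 (hr t).2
    simp only [Finset.sum_neg_distrib, neg_le_neg_iff] at this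
    exact ⟨hsum ▸ this, Finset.sum_nonpos fun t _ => (hr t).2⟩

lemma sum_apply_of_sum_eq {P : Type*} {S : Finset P} {s : P → EuclideanSpace ℝ ι}
    {d : EuclideanSpace ℝ ι} (hsum : ∑ p ∈ S, s p = d) (l : ι) : ∑ p ∈ S, s p l = d l := by
  rw [← hsum]; simp

lemma IsConformalTo.finset_sum {T : Type*} [Fintype T] {e : T → EuclideanSpace ℝ ι}
    {d : EuclideanSpace ℝ ι} (he : ∀ t, IsConformalTo (e t) d) (hsum : ∑ t, e t = d)
    (S : Finset T) : IsConformalTo (∑ t ∈ S, e t) d := by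
  intro l
  simpa using mem_uIcc_zero_of_sum_eq (fun t => he t l) (sum_apply_of_sum_eq hsum l) S

end Conformal

section Decomposition

variable {ι : Type*} [Fintype ι]

lemma exists_mul_neg_of_sum_eq_zero {w : ι → ℝ} (hw : ∑ l, w l = 0) {l₀ : ι} (hl₀ : w l₀ ≠ 0) :
    ∃ j, w l₀ * w j < 0 := by
  by_contra! hnonneg
  have hzero := (Finset.sum_eq_zero_iff_of_nonneg fun j _ => hnonneg j).1
    (by rw [← Finset.mul_sum, hw, mul_zero])
  exact hl₀ (mul_self_eq_zero.1 (hzero l₀ (Finset.mem_univ _)))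

/-- Take the smaller of two opposite weights fully and the larger one scaled by the ratio of
their sizes. -/
lemma exists_balancing_weights {w : ι → ℝ} {i j : ι} (hij : w i * w j < 0)
    (hle : |w i| ≤ |w j|) :
    ∃ c : ι → ℝ, (∀ l, c l ∈ Set.Icc 0 1) ∧ (∀ l, l ≠ i → l ≠ j → c l = 0) ∧
      ∑ l, c l * w l = 0 ∧ c i = 1 := by
  classical
  have hne : i ≠ j := by rintro rfl; nlinarith
  have hwj : w j ≠ 0 := by rintro h; simp [h] at hij
  refine ⟨fun l => if l = i then 1 else if l = j then -(w i / w j) else 0, ?_, ?_, ?_, by simp⟩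
  · intro l
    dsimp only
    split_ifs
    · simp
    · have hneg : w i / w j < 0 := by
        rw [show w i / w j = w i * w j / w j ^ 2 by field_simp]
        exact div_neg_of_neg_of_pos hij (by positivity)
      have hbound : |w i / w j| ≤ 1 := by
        rw [abs_div, div_le_one (abs_pos.2 hwj)]; exact hle
      constructor <;> linarith [neg_abs_le (w i / w j)]
    · simp
  · intro l hi hj
    simp [hi, hj]
  · rw [Fintype.sum_eq_add i j hne fun l ⟨hi, hj⟩ => by simp [hi, hj]]
    simp only [↓reduceIte, one_mul, hne.symm, neg_mul]
    field_simp
    ring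

lemma real_inner_eq_sum (a d : EuclideanSpace ℝ ι) : ⟪a, d⟫ = ∑ l, a l * d l := by
  simp [PiLp.inner_apply, mul_comm]

lemma exists_elementary_isConformalTo {a d : EuclideanSpace ℝ ι}
    (hd : ⟪a, d⟫ = 0) {l₀ : ι} (hl₀ : d l₀ ≠ 0) :
    ∃ e : EuclideanSpace ℝ ι, ⟪a, e⟫ = 0 ∧ (∃ l₁ l₂, ∀ l, l ≠ l₁ → l ≠ l₂ → e l = 0) ∧
      IsConformalTo e d ∧ ∃ l, d l ≠ 0 ∧ e l = d l := by
  classical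
  suffices ∃ (c : ι → ℝ) (l₁ l₂ : ι), (∀ l, c l ∈ Set.Icc 0 1) ∧
      (∀ l, l ≠ l₁ → l ≠ l₂ → c l = 0) ∧ ∑ l, c l * (a l * d l) = 0 ∧
      ∃ l, d l ≠ 0 ∧ c l = 1 by
    obtain ⟨c, l₁, l₂, hc, hsupp, hsum, l, hdl, hcl⟩ := this
    refine ⟨WithLp.toLp 2 (fun l => c l * d l), ?_,
      ⟨l₁, l₂, fun l h₁ h₂ => by simp [hsupp l h₁ h₂]⟩,
      fun l => mem_uIcc_zero_iff.2 ⟨c l, hc l, rfl⟩, l, hdl, by simp [hcl]⟩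
    rw [real_inner_eq_sum, ← hsum]
    exact Finset.sum_congr rfl fun l _ => by ring
  by_cases ha : a l₀ = 0
  · refine ⟨fun l => if l = l₀ then 1 else 0, l₀, l₀, fun l => ?_, fun l h _ => by simp [h],
      by simp [ha], l₀, hl₀, by simp⟩
    dsimp only
    split_ifs <;> simp
  have hw : ∑ l, a l * d l = 0 := by rw [← real_inner_eq_sum, hd]
  obtain ⟨j, hj⟩ := exists_mul_neg_of_sum_eq_zero hw (mul_ne_zero ha hl₀)
  have hd_ne {i k : ι} (h : a i * d i * (a k * d k) < 0) : d i ≠ 0 := by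
    rintro hi; simp [hi] at h
  rcases le_total |a l₀ * d l₀| |a j * d j| with hle | hle
  · obtain ⟨c, hc, hsupp, hsum, hc₁⟩ := exists_balancing_weights (w := fun l => a l * d l) hj hle
    exact ⟨c, l₀, j, hc, hsupp, hsum, l₀, hl₀, hc₁⟩
  · rw [mul_comm] at hj
    obtain ⟨c, hc, hsupp, hsum, hc₁⟩ := exists_balancing_weights (w := fun l => a l * d l) hj hle
    exact ⟨c, j, l₀, hc, hsupp, hsum, j, hd_ne hj, hc₁⟩

theorem exists_isConformalTo_decomposition (a : EuclideanSpace ℝ ι) :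
    ∀ d : EuclideanSpace ℝ ι, ⟪a, d⟫ = 0 →
      ∃ (m : ℕ) (e : Fin m → EuclideanSpace ℝ ι), (∀ t, ⟪a, e t⟫ = 0) ∧
        (∀ t, ∃ l₁ l₂, ∀ l, l ≠ l₁ → l ≠ l₂ → e t l = 0) ∧ ∑ t, e t = d ∧
        ∀ t, IsConformalTo (e t) d := by
  classical
  intro d hd
  induction hk : #{l | d l ≠ 0} using Nat.strong_induction_on generalizing d with
  | _ k ih =>
  by_cases hd0 : ∀ l, d l = 0
  · refine ⟨0, Fin.elim0, (·.elim0), (·.elim0), ?_, (·.elim0)⟩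
    ext l
    simp [hd0 l]
  obtain ⟨l₀, hl₀⟩ := not_forall.1 hd0
  obtain ⟨e, hae, hsupp, hconf, l, hdl, hel⟩ := exists_elementary_isConformalTo hd hl₀
  have hsub : ({l | (d - e) l ≠ 0} : Finset ι) ⊂ ({l | d l ≠ 0} : Finset ι) := by
    refine (Finset.ssubset_iff_of_subset fun l' => ?_).2 ⟨l, ?_, ?_⟩
    · simp only [Finset.mem_filter, Finset.mem_univ, true_and]
      exact mt hconf.sub_left.eq_zero_of_eq_zero
    · simpa using hdl
    · rw [Finset.mem_filter]
      simp [hel]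
  obtain ⟨m, e', hae', hsupp', hsum', hconf'⟩ :=
    ih _ (hk ▸ Finset.card_lt_card hsub) (d - e) (by rw [inner_sub_right, hd, hae, sub_zero]) rfl
  refine ⟨m + 1, Fin.cons e e', ?_, ?_, ?_, ?_⟩
  · simp [Fin.forall_fin_succ, hae, hae']
  · simp [Fin.forall_fin_succ, hsupp, hsupp']
  · simp [Fin.sum_univ_succ, hsum']
  · simp [Fin.forall_fin_succ, hconf, fun t => (hconf' t).trans hconf.sub_left]

lemma exists_lt_pair_cover {β : Type*} [LinearOrder β] [Nontrivial β] (u v : β) :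
    ∃ p : β × β, p.1 < p.2 ∧ (u = p.1 ∨ u = p.2) ∧ (v = p.1 ∨ v = p.2) := by
  rcases lt_trichotomy u v with huv | rfl | hvu
  · exact ⟨(u, v), huv, by simp⟩
  · obtain ⟨w, hw⟩ := exists_ne u
    rcases hw.lt_or_gt with hwu | huw
    · exact ⟨(w, u), hwu, by simp⟩
    · exact ⟨(u, w), huw, by simp⟩
  · exact ⟨(v, u), hvu, by simp⟩

theorem exists_blockPair_decomposition {β : Type*} [Fintype β] [LinearOrder β] [Nontrivial β]
    (blk : ι → β) {a d : EuclideanSpace ℝ ι} (hd : ⟪a, d⟫ = 0) :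
    ∃ s : β × β → EuclideanSpace ℝ ι, (∀ p, ⟪a, s p⟫ = 0) ∧
      (∀ p l, blk l ≠ p.1 → blk l ≠ p.2 → s p l = 0) ∧
      ∑ p with p.1 < p.2, s p = d ∧ ∀ p, IsConformalTo (s p) d := by
  obtain ⟨m, e, hae, hsupp, hsum, hconf⟩ := exists_isConformalTo_decomposition a d hd
  choose l₁ l₂ hsupp using hsupp
  choose P hP_lt hP₁ hP₂ using fun t => exists_lt_pair_cover (blk (l₁ t)) (blk (l₂ t))
  refine ⟨fun p => ∑ t with P t = p, e t, fun p => ?_, fun p l h₁ h₂ => ?_, ?_,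
    fun p => IsConformalTo.finset_sum hconf hsum _⟩
  · simp [inner_sum, hae]
  · simp only [WithLp.ofLp_sum, Finset.sum_apply]
    refine Finset.sum_eq_zero fun t ht => hsupp t l ?_ ?_ <;> rintro rfl <;>
      obtain rfl := (Finset.mem_filter.1 ht).2
    · exact (hP₁ t).elim h₁ h₂
    · exact (hP₂ t).elim h₁ h₂
  · rw [Finset.sum_fiberwise_of_maps_to fun t _ => by simpa using hP_lt t, hsum]

end Decomposition

/-- The junk value `r / 0 = 0` is harmless: `r ∈ [0, 0]` forces `r = 0`. -/
lemma ConvexOn.le_add_div_mul_of_mem_uIcc {φ : ℝ → ℝ} (hφ : ConvexOn ℝ Set.univ φ) (x : ℝ)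
    {r c : ℝ} (hr : r ∈ Set.uIcc 0 c) : φ (x + r) ≤ φ x + r / c * (φ (x + c) - φ x) := by
  obtain ⟨θ, ⟨hθ₀, hθ₁⟩, rfl⟩ := mem_uIcc_zero_iff.1 hr
  rcases eq_or_ne c 0 with rfl | hc
  · simp
  have hconv := hφ.2 (Set.mem_univ x) (Set.mem_univ (x + c)) (sub_nonneg.2 hθ₁) hθ₀
    (sub_add_cancel 1 θ)
  have harg : (1 - θ) • x + θ • (x + c) = x + θ * c := by simp only [smul_eq_mul]; ring
  rw [harg, smul_eq_mul, smul_eq_mul] at hconv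
  rw [mul_div_cancel_right₀ θ hc]
  linarith

section Coordinatewise

variable {T : Type*} {S : Finset T} {r : T → ℝ} {c : ℝ}

lemma sum_sq_le_sq_of_mem_uIcc (hr : ∀ t ∈ S, r t ∈ Set.uIcc 0 c) (hsum : ∑ t ∈ S, r t = c) :
    ∑ t ∈ S, r t ^ 2 ≤ c ^ 2 := by
  have hsq : ∀ t ∈ S, r t ^ 2 ≤ r t * c := fun t ht => by
    obtain ⟨θ, ⟨hθ₀, hθ₁⟩, hθ⟩ := mem_uIcc_zero_iff.1 (hr t ht)
    rw [← hθ]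
    nlinarith [mul_nonneg (mul_nonneg hθ₀ (sub_nonneg.2 hθ₁)) (sq_nonneg c)]
  calc ∑ t ∈ S, r t ^ 2 ≤ ∑ t ∈ S, r t * c := Finset.sum_le_sum hsq
    _ = c ^ 2 := by rw [← Finset.sum_mul, hsum, sq]

lemma ConvexOn.sum_le_of_mem_uIcc {φ : ℝ → ℝ} (hφ : ConvexOn ℝ Set.univ φ) (x : ℝ)
    (hr : ∀ t ∈ S, r t ∈ Set.uIcc 0 c) (hsum : ∑ t ∈ S, r t = c) :
    ∑ t ∈ S, φ (x + r t) ≤ (#S - 1) * φ x + φ (x + c) := by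
  calc ∑ t ∈ S, φ (x + r t) ≤ ∑ t ∈ S, (φ x + r t / c * (φ (x + c) - φ x)) :=
        Finset.sum_le_sum fun t ht => hφ.le_add_div_mul_of_mem_uIcc x (hr t ht)
    _ = #S * φ x + c / c * (φ (x + c) - φ x) := by
        rw [Finset.sum_add_distrib, ← Finset.sum_mul, ← Finset.sum_div, hsum]; simp
    _ = (#S - 1) * φ x + φ (x + c) := by
        rcases eq_or_ne c 0 with rfl | hc
        · simp only [div_zero, add_zero, sub_self, mul_zero]; ring
        · rw [div_self hc]; ring

end Coordinatewise

lemma sum_separable_le_of_isConformalTo {ι P : Type*} [Fintype ι] {S : Finset P}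
    {s : P → EuclideanSpace ℝ ι} {d : EuclideanSpace ℝ ι} (H : ι → ℝ → ℝ)
    (hH : ∀ l, ConvexOn ℝ Set.univ (H l)) (x : EuclideanSpace ℝ ι)
    (hs : ∀ p ∈ S, IsConformalTo (s p) d) (hsum : ∑ p ∈ S, s p = d) :
    ∑ p ∈ S, ∑ l, H l (x l + s p l) ≤ (#S - 1) * ∑ l, H l (x l) + ∑ l, H l (x l + d l) := by
  rw [Finset.sum_comm, Finset.mul_sum, ← Finset.sum_add_distrib]
  exact Finset.sum_le_sum fun l _ => (hH l).sum_le_of_mem_uIcc (x l) (fun p hp => hs p hp l)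
    (sum_apply_of_sum_eq hsum l)

lemma blockNormSq_eq_sum {n N : ℕ} (blk : Fin n → Fin N) (W : Fin N → ℝ) (y : En n) :
    blockNormSq blk W y = ∑ l, W (blk l) * y l ^ 2 := by
  simp only [blockNormSq, EuclideanSpace.real_norm_sq_eq, blockProj, Finset.mul_sum]
  rw [Finset.sum_comm]
  refine Finset.sum_congr rfl fun l _ => ?_
  simp [apply_ite (· ^ 2)]

lemma sum_mul_norm_sq_le_blockNormSq {n N : ℕ} {P : Type*} {S : Finset P} {s : P → En n}
    {d : En n} (blk : Fin n → Fin N) (w : P → ℝ) (W : Fin N → ℝ) (hW : ∀ i, 0 ≤ W i)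
    (hw : ∀ p ∈ S, ∀ l, s p l ≠ 0 → w p ≤ W (blk l)) (hs : ∀ p ∈ S, IsConformalTo (s p) d)
    (hsum : ∑ p ∈ S, s p = d) :
    ∑ p ∈ S, w p * ‖s p‖ ^ 2 ≤ blockNormSq blk W d := by
  have hterm : ∀ p ∈ S, ∀ l, w p * s p l ^ 2 ≤ W (blk l) * s p l ^ 2 := fun p hp l => by
    rcases eq_or_ne (s p l) 0 with hl | hl
    · simp [hl]
    · exact mul_le_mul_of_nonneg_right (hw p hp l hl) (sq_nonneg _)
  calc ∑ p ∈ S, w p * ‖s p‖ ^ 2 = ∑ l, ∑ p ∈ S, w p * s p l ^ 2 := by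
        simp only [EuclideanSpace.real_norm_sq_eq, Finset.mul_sum]; exact Finset.sum_comm
    _ ≤ ∑ l, W (blk l) * ∑ p ∈ S, s p l ^ 2 := by
        refine Finset.sum_le_sum fun l _ => ?_
        rw [Finset.mul_sum]
        exact Finset.sum_le_sum fun p hp => hterm p hp l
    _ ≤ ∑ l, W (blk l) * d l ^ 2 := Finset.sum_le_sum fun l _ => mul_le_mul_of_nonneg_left
        (sum_sq_le_sq_of_mem_uIcc (fun p hp => hs p hp l) (sum_apply_of_sum_eq hsum l)) (hW _)
    _ = blockNormSq blk W d := (blockNormSq_eq_sum blk W d).symm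

lemma blockNormSq_const_mul {n N : ℕ} (blk : Fin n → Fin N) (c : ℝ) (W : Fin N → ℝ) (y : En n) :
    blockNormSq blk (fun i => c * W i) y = c * blockNormSq blk W y := by
  simp [blockNormSq, Finset.mul_sum, mul_assoc]

lemma le_natCast_mul_of_eq_inv_mul_sum {N : ℕ} {L : Fin N → Fin N → ℝ} (hL : ∀ i j, 0 ≤ L i j)
    {Γ : Fin N → ℝ} (hΓ : ∀ i, Γ i = (N : ℝ)⁻¹ * ∑ j, L i j) (i j : Fin N) :
    L i j ≤ N * Γ i := by
  have hN : (N : ℝ) ≠ 0 := Nat.cast_ne_zero.2 (Fin.pos i).ne'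
  rw [hΓ, mul_inv_cancel_left₀ hN]
  exact Finset.single_le_sum (fun j _ => hL i j) (Finset.mem_univ j)

lemma sum_blockPair_mul_norm_sq_le {n N : ℕ} (blk : Fin n → Fin N) {L : Fin N → Fin N → ℝ}
    (hLpos : ∀ i j, 0 < L i j) (hLsym : ∀ i j, L i j = L j i) {Γ : Fin N → ℝ}
    (hΓ : ∀ i, Γ i = (N : ℝ)⁻¹ * ∑ j, L i j) {s : Fin N × Fin N → En n} {d : En n}
    (hs_supp : ∀ p l, blk l ≠ p.1 → blk l ≠ p.2 → s p l = 0)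
    (hs_conf : ∀ p, IsConformalTo (s p) d) (hs_sum : ∑ p with p.1 < p.2, s p = d) :
    ∑ p with p.1 < p.2, L p.1 p.2 / 2 * ‖s p‖ ^ 2 ≤ (N : ℝ) / 2 * blockNormSq blk Γ d := by
  have hL_le := le_natCast_mul_of_eq_inv_mul_sum (fun i j => (hLpos i j).le) hΓ
  rw [← blockNormSq_const_mul]
  refine sum_mul_norm_sq_le_blockNormSq blk _ _ (fun i => ?_) (fun p _ l hl => ?_)
    (fun p _ => hs_conf p) hs_sum
  · linarith [(hLpos i i).trans_le (hL_le i i)]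
  · rcases eq_or_ne (blk l) p.1 with h₁ | h₁
    · rw [h₁]; linarith [hL_le p.1 p.2]
    · rcases eq_or_ne (blk l) p.2 with h₂ | h₂
      · rw [hLsym, h₂]; linarith [hL_le p.2 p.1]
      · exact absurd (hs_supp p l h₁ h₂) hl

lemma card_filter_fst_lt_snd {β : Type*} [Fintype β] [LinearOrder β] :
    #{p : β × β | p.1 < p.2} = (Fintype.card β).choose 2 := by
  rw [← Finset.card_univ, ← Finset.card_product_filter_lt, Finset.univ_product_univ]

theorem stmt13_general {n N : ℕ} (hN : 2 ≤ N) (blk : Fin n → Fin N)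
    (L : Fin N → Fin N → ℝ) (hLpos : ∀ i j, 0 < L i j) (hLsym : ∀ i j, L i j = L j i)
    (f h : En n → ℝ) (g : En n → En n)
    (Hc : Fin n → ℝ → ℝ) (hHconv : ∀ l, ConvexOn ℝ Set.univ (Hc l))
    (hsep : ∀ x : En n, h x = ∑ l, Hc l (x l))
    (a : En n) (x : En n)
    (Γ : Fin N → ℝ) (hΓ : ∀ i, Γ i = (N : ℝ)⁻¹ * ∑ j, L i j)
    (D : Fin N → Fin N → En n)
    (hDmin : ∀ (i j : Fin N), i ≠ j → ∀ s : En n,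
      (∀ l, blk l ≠ i → blk l ≠ j → s l = 0) → ⟪a, s⟫ = 0 →
      f x + ⟪g x, D i j⟫ + L i j / 2 * ‖D i j‖ ^ 2 + h (x + D i j) ≤
      f x + ⟪g x, s⟫ + L i j / 2 * ‖s‖ ^ 2 + h (x + s))
    (dN : En n) (hdNfeas : ⟪a, dN⟫ = 0) :
    (2 / ((N : ℝ) * (N - 1))) *
        ∑ p ∈ Finset.univ.filter (fun p : Fin N × Fin N => p.1 < p.2),
          (f x + ⟪g x, D p.1 p.2⟫ + L p.1 p.2 / 2 * ‖D p.1 p.2‖ ^ 2 + h (x + D p.1 p.2)) ≤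
      (1 - 2 / ((N : ℝ) * (N - 1))) * (f x + h x) +
        (2 / ((N : ℝ) * (N - 1))) *
          (f x + ⟪g x, dN⟫ + (N : ℝ) / 2 * blockNormSq blk Γ dN + h (x + dN)) := by
  have : Nontrivial (Fin N) := Fin.nontrivial_iff_two_le.2 hN
  obtain ⟨s, hs_feas, hs_supp, hs_sum, hs_conf⟩ := exists_blockPair_decomposition blk hdNfeas
  set pairs := Finset.univ.filter fun p : Fin N × Fin N => p.1 < p.2
  have hN' : (2 : ℝ) ≤ N := by exact_mod_cast hN
  have hcard : 2 / ((N : ℝ) * (N - 1)) * #pairs = 1 := by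
    rw [card_filter_fst_lt_snd, Fintype.card_fin, Nat.cast_choose_two]
    field_simp [show (N : ℝ) - 1 ≠ 0 by linarith]
  have hquad := sum_blockPair_mul_norm_sq_le blk hLpos hLsym hΓ hs_supp hs_conf hs_sum
  have hsep_le : ∑ p ∈ pairs, h (x + s p) ≤ (#pairs - 1) * h x + h (x + dN) := by
    simpa only [hsep, PiLp.add_apply] using
      sum_separable_le_of_isConformalTo Hc hHconv x (fun p _ => hs_conf p) hs_sum
  have hlin : ∑ p ∈ pairs, ⟪g x, s p⟫ = ⟪g x, dN⟫ := by rw [← inner_sum, hs_sum]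
  have hkey : ∑ p ∈ pairs,
      (f x + ⟪g x, D p.1 p.2⟫ + L p.1 p.2 / 2 * ‖D p.1 p.2‖ ^ 2 + h (x + D p.1 p.2)) ≤
      (#pairs - 1) * (f x + h x) +
        (f x + ⟪g x, dN⟫ + (N : ℝ) / 2 * blockNormSq blk Γ dN + h (x + dN)) := calc
    _ ≤ ∑ p ∈ pairs, (f x + ⟪g x, s p⟫ + L p.1 p.2 / 2 * ‖s p‖ ^ 2 + h (x + s p)) :=
      Finset.sum_le_sum fun p hp =>
        hDmin _ _ (Finset.mem_filter.1 hp).2.ne _ (hs_supp p) (hs_feas p)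
    _ ≤ _ := by
      simp only [Finset.sum_add_distrib, Finset.sum_const, nsmul_eq_mul, hlin]
      linarith
  have hc₀ : 0 ≤ 2 / ((N : ℝ) * (N - 1)) := div_nonneg zero_le_two (by nlinarith)
  linear_combination (f x + h x) * hcard + mul_le_mul_of_nonneg_left hkey hc₀

/-- One-step expectation bound for the 2-random coordinate descent
method with uniform selection among the `N(N−1)/2` unordered block pairs.  With
`ψ_{L}(s;x) = f(x) + ⟨∇f(x), s⟩ + (1/2)‖s‖_L² + h(x+s)`, `Γ_i = (1/N) ∑_j L_{ij}`,
`D i j` the minimizer of the 2-block model over `S_{ij}` and `dN` the minimizer of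
`ψ_{NΓ}(·;x)` over `S = {s : aᵀs = 0}`, the average of `ψ_{L_{ij}·1}(D i j; x)` over all
pairs satisfies
`E[ψ_{L_{ij}1}(d_{ij};x)] ≤ (1 − 2/(N(N−1))) F(x) + (2/(N(N−1))) ψ_{NΓ}(dN; x)`. -/
theorem stmt13 {n N : ℕ} (hN : 2 ≤ N) (blk : Fin n → Fin N)
    (L : Fin N → Fin N → ℝ) (hLpos : ∀ i j, 0 < L i j) (hLsym : ∀ i j, L i j = L j i)
    (f h : En n → ℝ) (g : En n → En n) (hg : ∀ x, HasGradientAt f (g x) x)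
    (hlip : ∀ (i j : Fin N), i ≠ j → ∀ (y s : En n),
      (∀ l, blk l ≠ i → blk l ≠ j → s l = 0) →
      ‖(blockProj blk i (g (y + s)) + blockProj blk j (g (y + s))) -
        (blockProj blk i (g y) + blockProj blk j (g y))‖ ≤ L i j * ‖s‖)
    (Hc : Fin n → ℝ → ℝ) (hHconv : ∀ l, ConvexOn ℝ Set.univ (Hc l))
    (hsep : ∀ x : En n, h x = ∑ l, Hc l (x l)) (hcont : Continuous h)
    (a : En n) (ha : a ≠ 0) (b : ℝ)
    (x : En n) (hx : ⟪a, x⟫ = b)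
    (Γ : Fin N → ℝ) (hΓ : ∀ i, Γ i = (N : ℝ)⁻¹ * ∑ j, L i j)
    (D : Fin N → Fin N → En n)
    (hDsupp : ∀ i j, i ≠ j → ∀ l, blk l ≠ i → blk l ≠ j → D i j l = 0)
    (hDfeas : ∀ i j, ⟪a, D i j⟫ = 0)
    (hDmin : ∀ (i j : Fin N), i ≠ j → ∀ s : En n,
      (∀ l, blk l ≠ i → blk l ≠ j → s l = 0) → ⟪a, s⟫ = 0 →
      f x + ⟪g x, D i j⟫ + L i j / 2 * ‖D i j‖ ^ 2 + h (x + D i j) ≤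
      f x + ⟪g x, s⟫ + L i j / 2 * ‖s‖ ^ 2 + h (x + s))
    (dN : En n) (hdNfeas : ⟪a, dN⟫ = 0)
    (hdNmin : ∀ s : En n, ⟪a, s⟫ = 0 →
      f x + ⟪g x, dN⟫ + (N : ℝ) / 2 * blockNormSq blk Γ dN + h (x + dN) ≤
      f x + ⟪g x, s⟫ + (N : ℝ) / 2 * blockNormSq blk Γ s + h (x + s)) :
    (2 / ((N : ℝ) * (N - 1))) *
        ∑ p ∈ Finset.univ.filter (fun p : Fin N × Fin N => p.1 < p.2),
          (f x + ⟪g x, D p.1 p.2⟫ + L p.1 p.2 / 2 * ‖D p.1 p.2‖ ^ 2 + h (x + D p.1 p.2)) ≤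
      (1 - 2 / ((N : ℝ) * (N - 1))) * (f x + h x) +
        (2 / ((N : ℝ) * (N - 1))) *
          (f x + ⟪g x, dN⟫ + (N : ℝ) / 2 * blockNormSq blk Γ dN + h (x + dN)) :=
  stmt13_general hN blk L hLpos hLsym f h g Hc hHconv hsep a x Γ hΓ D hDmin dN hdNfeas
end
end
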